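/- arXiv:2412.05503 — 6 statements merged into one kernel-verified Lean document; each statement's English description precedes it below -/
import Mathlib

section
/- For every p ∈ [0, 1], the series T(p/e) = ∑_{n=1}^∞ (n^{n-1}/n!) · (p/e)^n converges and its sum w = T(p/e) satisfies the Lambert-function equation w · e^{-w} = p/e. In particular, for p = 1 the sum is w = 1, i.e. ∑_{n=1}^∞ (n^{n-1}/n!) e^{-n} = 1. -/
open Finset

lemma alt_sum_step (n : ℕ) (f : ℕ → ℝ) :
    ∑ k ∈ range (n + 2), (-1 : ℝ) ^ k * ((n + 1).choose k) * f k
      = ∑ k ∈ range (n + 1), (-1 : ℝ) ^ k * (n.choose k) * (f k - f (k + 1)) := by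
  have h1 : ∑ k ∈ range (n + 2), (-1 : ℝ) ^ k * ((n + 1).choose k) * f k
      = (∑ k ∈ range (n + 1), (-1 : ℝ) ^ (k+1) * ((n + 1).choose (k+1)) * f (k+1))
        + (-1 : ℝ) ^ 0 * ((n + 1).choose 0) * f 0 := by
    rw [Finset.sum_range_succ']
  rw [h1]
  have h2 : ∀ k, ((n + 1).choose (k+1) : ℝ) = (n.choose k : ℝ) + (n.choose (k+1) : ℝ) := by
    intro k; rw [Nat.choose_succ_succ]; push_cast; ring
  simp_rw [h2, mul_sub, Finset.sum_sub_distrib]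
  have h3 : ∑ k ∈ range (n + 1), (-1:ℝ)^(k+1) * ((n.choose k : ℝ) + (n.choose (k+1):ℝ)) * f (k+1)
      = (∑ k ∈ range (n + 1), (-1:ℝ)^(k+1) * (n.choose k) * f (k+1))
        + ∑ k ∈ range (n + 1), (-1:ℝ)^(k+1) * (n.choose (k+1)) * f (k+1) := by
    rw [← Finset.sum_add_distrib]; apply Finset.sum_congr rfl; intros; ring
  rw [h3]
  have h4 : (∑ k ∈ range (n + 1), (-1:ℝ)^(k+1) * (n.choose (k+1)) * f (k+1))
        + (-1 : ℝ) ^ 0 * ((n + 1).choose 0) * f 0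
      = ∑ k ∈ range (n + 2), (-1:ℝ)^k * (n.choose k) * f k := by
    rw [Finset.sum_range_succ' (fun k => (-1:ℝ)^k * (n.choose k) * f k) (n+1)]
    simp
  rw [add_assoc, h4, Finset.sum_range_succ (fun k => (-1:ℝ)^k * (n.choose k) * f k)]
  simp only [Nat.choose_succ_self, Nat.cast_zero, mul_zero, zero_mul, add_zero]
  have h5 : ∑ k ∈ range (n + 1), (-1:ℝ)^(k+1) * (n.choose k) * f (k+1)
      = -∑ k ∈ range (n + 1), (-1:ℝ)^k * (n.choose k) * f (k+1) := by
    rw [← Finset.sum_neg_distrib]; apply Finset.sum_congr rfl; intros; ring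
  rw [h5]; ring

lemma alt_sum_pow (n : ℕ) : ∀ j, j < n →
    ∑ k ∈ range (n + 1), (-1 : ℝ) ^ k * (n.choose k) * (k : ℝ) ^ j = 0 := by
  induction n with
  | zero => omega
  | succ m ih =>
    intro j hj
    rcases Nat.eq_zero_or_pos m with hm | hm
    · subst hm
      interval_cases j
      simp [Finset.sum_range_succ]
    rw [show m + 1 + 1 = m + 2 from rfl, alt_sum_step m (fun k => (k : ℝ) ^ j)]
    rcases Nat.eq_zero_or_pos j with hj0 | hj0
    · subst hj0; simp
    have expand : ∀ k : ℕ, ((k : ℝ)) ^ j - ((k : ℝ) + 1) ^ j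
        = ∑ i ∈ range j, -((j.choose i : ℝ) * (k : ℝ) ^ i) := by
      intro k
      have hb := add_pow (k : ℝ) 1 j
      rw [Finset.sum_range_succ] at hb
      simp only [one_pow, mul_one, Nat.choose_self, Nat.cast_one] at hb
      rw [hb]
      rw [Finset.sum_congr rfl (fun i _ => by ring : ∀ i ∈ range j,
        -((j.choose i : ℝ) * (k:ℝ)^i) = -((k:ℝ)^i * (j.choose i))),
        Finset.sum_neg_distrib]
      ring
    push_cast
    simp_rw [expand]
    have step2 : ∀ k ∈ range (m+1), (-1:ℝ)^k * (m.choose k) *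
          (∑ i ∈ range j, -((j.choose i : ℝ) * (k : ℝ) ^ i))
        = ∑ i ∈ range j, -((j.choose i : ℝ) * ((-1:ℝ)^k * (m.choose k) * (k:ℝ)^i)) := by
      intro k _
      rw [Finset.mul_sum]
      apply Finset.sum_congr rfl; intros; ring
    rw [Finset.sum_congr rfl step2, Finset.sum_comm]
    apply Finset.sum_eq_zero
    intro i hi
    have hij := Finset.mem_range.mp hi
    have key : ∑ x ∈ range (m+1), -((j.choose i:ℝ) * ((-1:ℝ)^x * (m.choose x) * (x:ℝ)^i))
        = -((j.choose i:ℝ) * ∑ x ∈ range (m+1), (-1:ℝ)^x * (m.choose x) * (x:ℝ)^i) := by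
      rw [Finset.sum_neg_distrib, Finset.mul_sum]
    rw [key, ih i (by omega : i < m)]
    simp

lemma alt_sum_affine (n : ℕ) (hn : 1 ≤ n) (x : ℝ) :
    ∑ k ∈ range (n + 1), (-1:ℝ)^k * (n.choose k) * (x + (k:ℝ)) ^ (n - 1) = 0 := by
  have expand : ∀ k : ℕ, (-1:ℝ)^k * (n.choose k) * (x + (k:ℝ)) ^ (n - 1)
      = ∑ i ∈ range (n - 1 + 1), (x ^ i * ((n-1).choose i : ℝ))
          * ((-1:ℝ)^k * (n.choose k) * (k:ℝ) ^ (n - 1 - i)) := by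
    intro k
    rw [add_pow x (k:ℝ) (n-1), Finset.mul_sum]
    apply Finset.sum_congr rfl; intros; ring
  simp_rw [expand]
  rw [Finset.sum_comm]
  apply Finset.sum_eq_zero
  intro i _
  rw [← Finset.mul_sum, alt_sum_pow n (n - 1 - i) (by omega), mul_zero]

/-- The Abel summand: `x (x+k)^{k-1}` for `k ≥ 1`, with the convention `1` at `k = 0`. -/
noncomputable def abelE (k : ℕ) (x : ℝ) : ℝ := if k = 0 then 1 else x * (x + (k:ℝ)) ^ (k - 1)

lemma abel_identity (n : ℕ) (x y : ℝ) :
    ∑ k ∈ range (n + 1), (n.choose k : ℝ) * abelE k x * (y + ((n - k : ℕ):ℝ)) ^ (n - k)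
      = (x + y + n) ^ n := by
  induction n generalizing y with
  | zero => simp [abelE]
  | succ n ih =>
    -- the two sides, as functions of y
    set F : ℝ → ℝ := fun y => ∑ k ∈ range (n + 2),
      ((n+1).choose k : ℝ) * abelE k x * (y + ((n + 1 - k : ℕ):ℝ)) ^ (n + 1 - k) with hF
    set G : ℝ → ℝ := fun y => (x + y + (n+1:ℕ)) ^ (n+1) with hG
    -- derivative of F
    have hFd : ∀ y : ℝ, HasDerivAt F
        ((n+1 : ℝ) * ∑ k ∈ range (n + 1),
          (n.choose k : ℝ) * abelE k x * ((y+1) + ((n - k : ℕ):ℝ)) ^ (n - k)) y := by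
      intro y
      have hterm : ∀ k ∈ range (n + 2), HasDerivAt
          (fun y : ℝ => ((n+1).choose k : ℝ) * abelE k x * (y + ((n + 1 - k : ℕ):ℝ)) ^ (n + 1 - k))
          (((n+1).choose k : ℝ) * abelE k x * ((n+1-k : ℕ) * (y + ((n + 1 - k : ℕ):ℝ)) ^ (n + 1 - k - 1))) y := by
        intro k _
        have h := (((hasDerivAt_id' y).add_const (((n+1-k:ℕ)):ℝ)).pow (n+1-k)).const_mul
          (((n+1).choose k : ℝ) * abelE k x)
        simpa using h
      have hsum := HasDerivAt.fun_sum hterm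
      refine hsum.congr_deriv (Eq.symm ?_)
      conv_rhs => rw [Finset.sum_range_succ]
      have hlast : ((n+1).choose (n+1) : ℝ) * abelE (n+1) x *
          ((n+1-(n+1) : ℕ) * (y + ((n + 1 - (n+1) : ℕ):ℝ)) ^ (n + 1 - (n+1) - 1)) = 0 := by
        simp
      rw [hlast, add_zero, Finset.mul_sum]
      apply Finset.sum_congr rfl
      intro k hk
      have hk' : k ≤ n := by simpa [Nat.lt_succ_iff] using Finset.mem_range.mp hk
      have hchoose : ((n+1-k : ℕ) : ℝ) * ((n+1).choose k : ℝ) = ((n+1):ℝ) * (n.choose k : ℝ) := by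
        have h1 : (n+1) * n.choose (n - k) = (n+1).choose (n - k + 1) * (n - k + 1) := by
          simpa using Nat.add_one_mul_choose_eq n (n - k)
        have h2 : n.choose (n - k) = n.choose k := Nat.choose_symm hk'
        have h3 : (n+1).choose (n - k + 1) = (n+1).choose k := by
          rw [← Nat.choose_symm (by omega : n - k + 1 ≤ n + 1)]
          congr 1
          omega
        have h4 : (n+1) * n.choose k = (n+1).choose k * (n + 1 - k) := by
          rw [← h2, h1, h3]
          congr 1
          omega
        have h4' : (n+1-k) * ((n+1).choose k) = (n+1) * n.choose k := by
          rw [mul_comm]; exact h4.symm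
        exact_mod_cast congrArg (Nat.cast : ℕ → ℝ) h4' 
      have he : n + 1 - k = (n - k) + 1 := by omega
      have he2 : n + 1 - k - 1 = n - k := by omega
      have he3 : (y + ((n + 1 - k : ℕ):ℝ)) = ((y+1) + ((n - k : ℕ):ℝ)) := by
        push_cast [he]
        ring
      rw [he2, he3]
      rw [show ((n+1).choose k : ℝ) * abelE k x * (((n+1-k : ℕ):ℝ) * ((y+1) + ((n - k : ℕ):ℝ)) ^ (n - k))
          = (((n+1-k : ℕ):ℝ) * ((n+1).choose k : ℝ)) * abelE k x * ((y+1) + ((n - k : ℕ):ℝ)) ^ (n - k) by ring]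
      rw [hchoose]
      push_cast
      ring
    -- derivative of G
    have hGd : ∀ y : ℝ, HasDerivAt G
        ((n+1:ℝ) * (x + y + (n+1:ℕ)) ^ n) y := by
      intro y
      have : HasDerivAt (fun y : ℝ => (x + y + ((n+1:ℕ):ℝ))) 1 y := by
        simpa using ((hasDerivAt_id y).const_add x).add_const ((n+1:ℕ):ℝ)
      have := this.fun_pow (n+1)
      simpa [hG, mul_comm, Nat.add_sub_cancel] using this
    -- derivatives agree
    have hderiv_eq : ∀ y : ℝ, HasDerivAt (fun y => F y - G y) 0 y := by
      intro y
      have h1 := (hFd y).sub (hGd y)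
      have h2 : (n+1 : ℝ) * ∑ k ∈ range (n + 1),
          (n.choose k : ℝ) * abelE k x * ((y+1) + ((n - k : ℕ):ℝ)) ^ (n - k)
          - (n+1:ℝ) * (x + y + (n+1:ℕ)) ^ n = 0 := by
        rw [ih (y+1)]
        push_cast
        ring_nf
      rwa [h2] at h1
    -- F - G is constant
    have hconst : ∀ y z : ℝ, F y - G y = F z - G z := by
      intro y z
      exact is_const_of_deriv_eq_zero (fun t => (hderiv_eq t).differentiableAt)
        (fun t => (hderiv_eq t).deriv) y z
    -- evaluate at y₀ = -x - (n+1)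
    have heval : F (-x - ((n+1:ℕ):ℝ)) - G (-x - ((n+1:ℕ):ℝ)) = 0 := by
      have hGz : G (-x - ((n+1:ℕ):ℝ)) = 0 := by
        simp [hG]
        ring_nf
      have hFz : F (-x - ((n+1:ℕ):ℝ)) = 0 := by
        show ∑ k ∈ range (n + 2), ((n+1).choose k : ℝ) * abelE k x *
          ((-x - ((n+1:ℕ):ℝ)) + ((n + 1 - k : ℕ):ℝ)) ^ (n + 1 - k) = 0
        have hterm : ∀ k ∈ range (n+2),
            ((n+1).choose k : ℝ) * abelE k x * ((-x - ((n+1:ℕ):ℝ)) + ((n + 1 - k : ℕ):ℝ)) ^ (n + 1 - k)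
            = x * ((-1:ℝ)^(n+1) * ((-1:ℝ)^k * ((n+1).choose k : ℝ) * (x + (k:ℝ)) ^ ((n+1) - 1))) := by
          intro k hk
          have hk' : k ≤ n + 1 := by simpa [Nat.lt_succ_iff] using Finset.mem_range.mp hk
          have hbase : ((-x - ((n+1:ℕ):ℝ)) + ((n + 1 - k : ℕ):ℝ)) = -(x + (k:ℝ)) := by
            push_cast [Nat.cast_sub hk']
            ring
          rw [hbase, neg_pow]
          have hsgn : (-1:ℝ) ^ (n + 1 - k) = (-1:ℝ)^(n+1) * (-1:ℝ)^k := by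
            have hmain : (-1:ℝ) ^ (n + 1 - k) * (-1:ℝ)^k = (-1:ℝ)^(n+1) := by
              rw [← pow_add, Nat.sub_add_cancel hk']
            have hsq : (-1:ℝ)^k * (-1:ℝ)^k = 1 := by
              rw [← pow_add, ← two_mul, pow_mul]
              norm_num
            calc (-1:ℝ)^(n+1-k) = (-1:ℝ)^(n+1-k) * ((-1:ℝ)^k * (-1:ℝ)^k) := by rw [hsq, mul_one]
              _ = ((-1:ℝ)^(n+1-k) * (-1:ℝ)^k) * (-1:ℝ)^k := by ring
              _ = (-1:ℝ)^(n+1) * (-1:ℝ)^k := by rw [hmain]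
          rcases Nat.eq_zero_or_pos k with rfl | hkpos
          · simp only [abelE, if_pos rfl]
            rw [hsgn]
            simp only [pow_zero, Nat.choose_zero_right, Nat.cast_one, Nat.cast_zero, add_zero,
              one_mul, mul_one, Nat.sub_zero, Nat.add_sub_cancel]
            ring_nf
            simp
          · simp only [abelE, if_neg (Nat.pos_iff_ne_zero.mp hkpos)]
            rw [hsgn]
            have hpow : (x + (k:ℝ)) ^ (k-1) * (x + (k:ℝ)) ^ (n + 1 - k) = (x + (k:ℝ)) ^ n := by
              rw [← pow_add]
              congr 1
              omega
            rw [show n + 1 - 1 = n from rfl]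
            calc ((n+1).choose k : ℝ) * (x * (x + (k:ℝ)) ^ (k-1)) *
                  ((-1:ℝ)^(n+1) * (-1:ℝ)^k * (x + (k:ℝ)) ^ (n + 1 - k))
                = x * ((-1:ℝ)^(n+1) * ((-1:ℝ)^k * ((n+1).choose k : ℝ) *
                    ((x + (k:ℝ)) ^ (k-1) * (x + (k:ℝ)) ^ (n + 1 - k)))) := by ring
              _ = _ := by rw [hpow]
        rw [Finset.sum_congr rfl hterm]
        rw [← Finset.mul_sum, ← Finset.mul_sum]
        rw [show n + 2 = (n+1) + 1 from rfl, alt_sum_affine (n+1) (by omega) x]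
        ring
      rw [hFz, hGz, sub_zero]
    have := hconst y (-x - ((n+1:ℕ):ℝ))
    rw [heval] at this
    have hFG : F y = G y := by linarith [this]
    simpa [hF, hG] using hFG

lemma abel_tree_sum (n : ℕ) (hn : 1 ≤ n) :
    ∑ k ∈ range (n+1), (if k = 0 then 0 else
      (n.choose k : ℝ) * (k:ℝ)^(k-1) * ((n-k:ℕ):ℝ)^(n-k)) = (n:ℝ)^n := by
  set F : ℝ → ℝ := fun x => ∑ k ∈ range (n+1),
    (n.choose k : ℝ) * abelE k x * ((0:ℝ) + ((n-k:ℕ):ℝ)) ^ (n-k) with hFdef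
  have hEq : F = fun x : ℝ => (x + 0 + (n:ℝ)) ^ n := by
    funext x
    exact abel_identity n x 0
  -- derivative of F at 0, term by term
  have hFd : HasDerivAt F (∑ k ∈ range (n+1), (if k = 0 then 0 else
      (n.choose k : ℝ) * (k:ℝ)^(k-1) * ((n-k:ℕ):ℝ)^(n-k))) 0 := by
    apply HasDerivAt.fun_sum
    intro k hk
    rcases Nat.eq_zero_or_pos k with rfl | hkpos
    · simp only [if_pos rfl]
      have : (fun x : ℝ => (n.choose 0 : ℝ) * abelE 0 x * ((0:ℝ) + ((n-0:ℕ):ℝ)) ^ (n-0))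
          = fun _ : ℝ => (n.choose 0 : ℝ) * 1 * ((0:ℝ) + ((n-0:ℕ):ℝ)) ^ (n-0) := by
        funext x; simp [abelE]
      rw [this]
      exact hasDerivAt_const _ _
    · have hkne : k ≠ 0 := Nat.pos_iff_ne_zero.mp hkpos
      simp only [if_neg hkne]
      have h1 : HasDerivAt (fun x : ℝ => x * (x + (k:ℝ)) ^ (k-1))
          (1 * ((0:ℝ) + (k:ℝ)) ^ (k-1) + 0 * (((k-1 : ℕ):ℝ) * ((0:ℝ) + (k:ℝ)) ^ (k-1-1) * 1)) 0 := by
        exact (hasDerivAt_id' (0:ℝ)).mul (((hasDerivAt_id' (0:ℝ)).add_const _).fun_pow _)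
      have h2 := h1.const_mul ((n.choose k : ℝ) * ((0:ℝ) + ((n-k:ℕ):ℝ)) ^ (n-k))
      have h3 : (fun x : ℝ => (n.choose k : ℝ) * ((0:ℝ) + ((n-k:ℕ):ℝ)) ^ (n-k) *
            (x * (x + (k:ℝ)) ^ (k-1)))
          = fun x : ℝ => (n.choose k : ℝ) * abelE k x * ((0:ℝ) + ((n-k:ℕ):ℝ)) ^ (n-k) := by
        funext x; simp only [abelE, if_neg hkne]; ring
      rw [h3] at h2
      refine h2.congr_deriv (Eq.symm ?_)
      simp only [zero_add]
      ring
  -- derivative of the closed form at 0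
  have hGd : HasDerivAt (fun x : ℝ => (x + 0 + (n:ℝ)) ^ n) ((n:ℝ)^n) 0 := by
    have h1 : HasDerivAt (fun x : ℝ => (x + 0 + (n:ℝ))) 1 0 := by
      simpa using ((hasDerivAt_id' (0:ℝ)).add_const 0).add_const (n:ℝ)
    have h2 := h1.fun_pow n
    have h3 : (n:ℝ) * ((0:ℝ) + 0 + (n:ℝ)) ^ (n-1) * 1 = (n:ℝ)^n := by
      simp only [zero_add, mul_one]
      rw [← pow_succ']
      congr 1
      omega
    rwa [h3] at h2
  rw [hEq] at hFd
  exact hFd.unique hGd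

/-- Tree function coefficients: `t n = n^{n-1}/n!`, with `t 0 = 0`. -/
noncomputable def tc (n : ℕ) : ℝ := if n = 0 then 0 else (n:ℝ)^(n-1) / (n.factorial : ℝ)

lemma tc_nonneg (n : ℕ) : 0 ≤ tc n := by
  unfold tc
  split
  · exact le_rfl
  · positivity

lemma tc_conv (n : ℕ) :
    ∑ k ∈ range (n+1), tc k * (((n-k:ℕ)):ℝ) * tc (n-k) = (n:ℝ) * tc n - tc n := by
  rcases Nat.eq_zero_or_pos n with rfl | hn
  · simp [tc]
  have habel := abel_tree_sum n hn
  have key : ∀ k ∈ range n, (if k = 0 then 0 else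
      (n.choose k : ℝ) * (k:ℝ)^(k-1) * ((n-k:ℕ):ℝ)^(n-k))
      = (n.factorial : ℝ) * (tc k * (((n-k:ℕ)):ℝ) * tc (n-k)) := by
    intro k hk
    have hkn : k < n := Finset.mem_range.mp hk
    rcases Nat.eq_zero_or_pos k with rfl | hkpos
    · simp [tc]
    have hkne : k ≠ 0 := Nat.pos_iff_ne_zero.mp hkpos
    have hnkne : n - k ≠ 0 := by omega
    simp only [if_neg hkne, tc, if_neg hnkne]
    have hfac : (n.choose k : ℝ) * (k.factorial : ℝ) * ((n-k).factorial : ℝ) = (n.factorial : ℝ) := by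
      exact_mod_cast congrArg (Nat.cast : ℕ → ℝ) (Nat.choose_mul_factorial_mul_factorial hkn.le)
    have hpow : (((n-k:ℕ)):ℝ) * ((n-k:ℕ):ℝ)^(n-k-1) = ((n-k:ℕ):ℝ)^(n-k) := by
      rw [← pow_succ']
      congr 1
      omega
    have hk0 : (k.factorial : ℝ) ≠ 0 := by positivity
    have hnk0 : ((n-k).factorial : ℝ) ≠ 0 := by positivity
    field_simp
    rw [← hfac, ← hpow]
    ring
  rw [Finset.sum_range_succ] at *
  rw [Finset.sum_congr rfl key] at habel
  have hlastF : tc n * (((n-n:ℕ)):ℝ) * tc (n-n) = 0 := by simp [tc]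
  have hlastG : (if n = 0 then (0:ℝ) else
      (n.choose n : ℝ) * (n:ℝ)^(n-1) * ((n-n:ℕ):ℝ)^(n-n)) = (n:ℝ)^(n-1) := by
    rw [if_neg (by omega : n ≠ 0)]
    simp
  rw [hlastG] at habel
  rw [hlastF, add_zero]
  rw [← Finset.mul_sum] at habel
  -- habel : n! * S + n^{n-1} = n^n
  have hS : ∑ x ∈ range n, tc x * (((n-x:ℕ)):ℝ) * tc (n-x)
      = ((n:ℝ)^n - (n:ℝ)^(n-1)) / (n.factorial : ℝ) := by
    have hfn : (n.factorial : ℝ) ≠ 0 := by positivity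
    field_simp
    linarith [habel]
  rw [hS]
  unfold tc
  rw [if_neg (by omega : n ≠ 0)]
  have hfn : (n.factorial : ℝ) ≠ 0 := by positivity
  field_simp
  rw [show n = n - 1 + 1 by omega, pow_succ]
  push_cast [show n - 1 + 1 - 1 = n - 1 from rfl]
  ring

lemma tc_le_exp (n : ℕ) : tc n ≤ Real.exp 1 ^ n := by
  unfold tc
  split
  · positivity
  · rename_i hne
    have h1 : (n:ℝ)^(n-1) ≤ (n:ℝ)^n := by
      apply pow_le_pow_right₀ (by exact_mod_cast Nat.one_le_iff_ne_zero.mpr hne) (by omega)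
    have h2 : (n:ℝ)^n / (n.factorial : ℝ) ≤ Real.exp (n:ℝ) :=
      Real.pow_div_factorial_le_exp (x := (n:ℝ)) (Nat.cast_nonneg n) n
    have h3 : Real.exp ((n:ℝ)) = Real.exp 1 ^ n := by
      rw [← Real.exp_one_rpow (n:ℝ), Real.rpow_natCast]
    have h4 : (0:ℝ) < (n.factorial : ℝ) := by positivity
    calc (n:ℝ)^(n-1) / (n.factorial : ℝ) ≤ (n:ℝ)^n / (n.factorial : ℝ) :=
          div_le_div_of_nonneg_right h1 h4.le |>.trans_eq rfl
      _ ≤ Real.exp 1 ^ n := h3 ▸ h2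

lemma abs_tc_mul_pow_le {x : ℝ} (n : ℕ) (hx : 0 ≤ x) :
    |tc n * x ^ n| ≤ (Real.exp 1 * x) ^ n := by
  rw [abs_of_nonneg (mul_nonneg (tc_nonneg n) (pow_nonneg hx n)), mul_pow]
  exact mul_le_mul_of_nonneg_right (tc_le_exp n) (by positivity)

lemma summable_tc {x : ℝ} (hx : 0 ≤ x) (hex : Real.exp 1 * x < 1) :
    Summable (fun n => tc n * x ^ n) := by
  apply Summable.of_norm
  apply Summable.of_nonneg_of_le (fun n => norm_nonneg _) (fun n => abs_tc_mul_pow_le n hx)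
  exact summable_geometric_of_lt_one (by positivity) hex

/-- The tree function, as a power series. -/
noncomputable def treeT (x : ℝ) : ℝ := ∑' n, tc n * x ^ n

lemma summable_nq {q : ℝ} (hq0 : 0 ≤ q) (hq : q < 1) :
    Summable (fun n : ℕ => (n:ℝ) * q ^ (n-1)) := by
  rw [← summable_nat_add_iff 1]
  have h1 : Summable (fun n : ℕ => (n:ℝ) * q ^ n) := by
    have := summable_pow_mul_geometric_of_norm_lt_one 1 (r := q)
      (by rwa [Real.norm_eq_abs, abs_of_nonneg hq0])
    simpa using this
  have h2 : Summable (fun n : ℕ => q ^ n) := summable_geometric_of_lt_one hq0 hq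
  have := h1.add h2
  apply this.congr
  intro n
  push_cast
  ring_nf

lemma summable_deriv_bound {r : ℝ} (hr0 : 0 ≤ r) (hre : Real.exp 1 * r < 1) :
    Summable (fun n : ℕ => (n:ℝ) * Real.exp 1 ^ n * r ^ (n-1)) := by
  have hq0 : 0 ≤ Real.exp 1 * r := by positivity
  have h := (summable_nq hq0 hre).mul_left (Real.exp 1)
  apply h.congr
  intro n
  rcases Nat.eq_zero_or_pos n with rfl | hn
  · simp
  · rw [mul_pow]
    have : Real.exp 1 ^ (n-1) * Real.exp 1 = Real.exp 1 ^ n := by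
      rw [← pow_succ]
      congr 1
      omega
    rw [← this]
    ring

lemma treeT_hasDerivAt {r x : ℝ} (hr0 : 0 < r) (hre : Real.exp 1 * r < 1)
    (hx : x ∈ Set.Ioo (-r) r) :
    HasDerivAt treeT (∑' n, tc n * ((n:ℝ) * x ^ (n-1))) x := by
  apply hasDerivAt_tsum_of_isPreconnected (summable_deriv_bound hr0.le hre)
    isOpen_Ioo (convex_Ioo _ _).isPreconnected
    (g := fun n y => tc n * y ^ n) (g' := fun n y => tc n * ((n:ℝ) * y ^ (n-1)))
    (y₀ := 0) (fun n y _ => (hasDerivAt_pow n y).const_mul (tc n)) ?_ ?_ ?_ hx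
  · intro n y hy
    have hyr : |y| ≤ r := by
      rw [abs_le]
      exact ⟨hy.1.le, hy.2.le⟩
    rw [Real.norm_eq_abs, abs_mul, abs_mul]
    have h1 : |tc n| ≤ Real.exp 1 ^ n := by
      rw [abs_of_nonneg (tc_nonneg n)]; exact tc_le_exp n
    have h2 : |y ^ (n-1)| ≤ r ^ (n-1) := by
      rw [abs_pow]
      exact pow_le_pow_left₀ (abs_nonneg y) hyr _
    calc |tc n| * (|(n:ℝ)| * |y ^ (n-1)|)
        ≤ Real.exp 1 ^ n * ((n:ℝ) * r ^ (n-1)) := by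
          apply mul_le_mul h1 ?_ (by positivity) (by positivity)
          rw [abs_of_nonneg (Nat.cast_nonneg n : (0:ℝ) ≤ n)]
          exact mul_le_mul_of_nonneg_left h2 (Nat.cast_nonneg n)
      _ = (n:ℝ) * Real.exp 1 ^ n * r ^ (n-1) := by ring
  · exact Set.mem_Ioo.mpr ⟨by linarith, hr0⟩
  · exact summable_tc le_rfl (by norm_num)

lemma star_identity {x : ℝ} (hx0 : 0 ≤ x) (hex : Real.exp 1 * x < 1) :
    (∑' n, tc n * x ^ n) * (∑' (n : ℕ), (n:ℝ) * tc n * x ^ n)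
      = (∑' (n : ℕ), (n:ℝ) * tc n * x ^ n) - (∑' n, tc n * x ^ n) := by
  have hf : Summable (fun n => ‖tc n * x ^ n‖) := by
    apply Summable.of_nonneg_of_le (fun n => norm_nonneg _) (fun n => abs_tc_mul_pow_le n hx0)
    exact summable_geometric_of_lt_one (by positivity) hex
  have hgle : ∀ n : ℕ, ‖(n:ℝ) * tc n * x ^ n‖ ≤ (n:ℝ) * (Real.exp 1 * x) ^ n := by
    intro n
    rw [mul_assoc, Real.norm_eq_abs, abs_mul, abs_of_nonneg (Nat.cast_nonneg n : (0:ℝ) ≤ n)]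
    exact mul_le_mul_of_nonneg_left (abs_tc_mul_pow_le n hx0) (Nat.cast_nonneg n)
  have hgsum : Summable (fun n : ℕ => (n:ℝ) * (Real.exp 1 * x) ^ n) := by
    have := summable_pow_mul_geometric_of_norm_lt_one 1 (r := Real.exp 1 * x)
      (by rw [Real.norm_eq_abs, abs_of_nonneg (by positivity)]; exact hex)
    simpa using this
  have hg : Summable (fun n : ℕ => ‖(n:ℝ) * tc n * x ^ n‖) :=
    Summable.of_nonneg_of_le (fun n => norm_nonneg _) hgle hgsum
  rw [tsum_mul_tsum_eq_tsum_sum_range_of_summable_norm hf hg]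
  have hinner : ∀ n : ℕ, ∑ k ∈ range (n+1), (tc k * x ^ k) * ((((n-k:ℕ)):ℝ) * tc (n-k) * x ^ (n-k))
      = ((n:ℝ) * tc n - tc n) * x ^ n := by
    intro n
    rw [← tc_conv n, Finset.sum_mul]
    apply Finset.sum_congr rfl
    intro k hk
    have hkn : k ≤ n := by simpa [Nat.lt_succ_iff] using Finset.mem_range.mp hk
    have : x ^ k * x ^ (n-k) = x ^ n := by
      rw [← pow_add]
      congr 1
      omega
    rw [← this]
    ring
  rw [tsum_congr hinner]
  have h1 : Summable (fun n : ℕ => (n:ℝ) * tc n * x ^ n) := hg.of_norm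
  have h2 : Summable (fun n => tc n * x ^ n) := hf.of_norm
  rw [tsum_congr (fun n => by ring_nf : ∀ n : ℕ,
    ((n:ℝ) * tc n - tc n) * x ^ n = (n:ℝ) * tc n * x ^ n - tc n * x ^ n)]
  exact Summable.tsum_sub h1 h2

lemma treeT_nonneg {x : ℝ} (hx : 0 ≤ x) : 0 ≤ treeT x :=
  tsum_nonneg (fun n => mul_nonneg (tc_nonneg n) (pow_nonneg hx n))

lemma treeT_zero : treeT 0 = 0 := by
  have hzero : (fun n => tc n * (0:ℝ) ^ n) = fun _ => (0:ℝ) := by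
    funext n
    rcases Nat.eq_zero_or_pos n with rfl | hn
    · simp [tc]
    · simp [zero_pow (by omega : n ≠ 0)]
  unfold treeT
  rw [hzero, tsum_zero]

lemma tc_one : tc 1 = 1 := by norm_num [tc]

set_option maxHeartbeats 1000000 in
/-- Key bound: `z ≤ treeT z ≤ z + (e z)^2/(1 - e z)` for `0 ≤ z`, `e z < 1`. -/
lemma treeT_sub_self_bound {z : ℝ} (hz : 0 ≤ z) (hez : Real.exp 1 * z < 1) :
    z ≤ treeT z ∧ treeT z ≤ z + (Real.exp 1 * z)^2 / (1 - Real.exp 1 * z) := by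
  have hsum := summable_tc hz hez
  have hq0 : 0 ≤ Real.exp 1 * z := by positivity
  have hsplit : ∑ i ∈ range 2, tc i * z ^ i + ∑' n, tc (n + 2) * z ^ (n + 2)
      = ∑' n, tc n * z ^ n := hsum.sum_add_tsum_nat_add 2
  rw [show treeT z = ∑' n, tc n * z ^ n from rfl]
  have hhead : ∑ i ∈ range 2, tc i * z ^ i = z := by
    rw [Finset.sum_range_succ, Finset.sum_range_one, tc_one]
    norm_num [tc]
  have htail_sum : Summable (fun n => tc (n + 2) * z ^ (n + 2)) :=
    (summable_nat_add_iff 2).mpr hsum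
  have htail_nonneg : 0 ≤ ∑' n, tc (n + 2) * z ^ (n + 2) :=
    tsum_nonneg (fun n => mul_nonneg (tc_nonneg _) (pow_nonneg hz _))
  have hgeo : Summable (fun n : ℕ => (Real.exp 1 * z)^2 * (Real.exp 1 * z) ^ n) :=
    (summable_geometric_of_lt_one hq0 hez).mul_left _
  have htail_le : ∑' n, tc (n + 2) * z ^ (n + 2)
      ≤ (Real.exp 1 * z)^2 / (1 - Real.exp 1 * z) := by
    have h1 : ∑' n, tc (n + 2) * z ^ (n + 2)
        ≤ ∑' n : ℕ, (Real.exp 1 * z)^2 * (Real.exp 1 * z) ^ n := by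
      apply Summable.tsum_le_tsum ?_ htail_sum hgeo
      intro n
      have := abs_tc_mul_pow_le (x := z) (n + 2) hz
      rw [abs_of_nonneg (mul_nonneg (tc_nonneg _) (pow_nonneg hz _))] at this
      calc tc (n + 2) * z ^ (n + 2) ≤ (Real.exp 1 * z) ^ (n + 2) := this
        _ = (Real.exp 1 * z)^2 * (Real.exp 1 * z) ^ n := by ring
    rw [tsum_mul_left, tsum_geometric_of_lt_one hq0 hez] at h1
    calc ∑' n, tc (n + 2) * z ^ (n + 2)
        ≤ (Real.exp 1 * z)^2 * (1 - Real.exp 1 * z)⁻¹ := h1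
      _ = (Real.exp 1 * z)^2 / (1 - Real.exp 1 * z) := by rw [div_eq_mul_inv]
  constructor
  · linarith [hsplit, hhead, htail_nonneg]
  · linarith [hsplit, hhead, htail_le]

lemma treeT_tendsto_zero : Filter.Tendsto treeT (nhdsWithin 0 (Set.Ioi 0)) (nhds 0) := by
  have hbound : ∀ z ∈ Set.Ioo (0:ℝ) ((2 * Real.exp 1)⁻¹), treeT z ≤ z + 2 * (Real.exp 1 * z)^2 := by
    intro z hz
    have he1 : (1:ℝ) ≤ Real.exp 1 := by
      have := Real.add_one_le_exp (1:ℝ); linarith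
    have hez : Real.exp 1 * z < 1 / 2 := by
      rw [Set.mem_Ioo] at hz
      have h2 : z < (2 * Real.exp 1)⁻¹ := hz.2
      have hpos : (0:ℝ) < 2 * Real.exp 1 := by positivity
      calc Real.exp 1 * z < Real.exp 1 * (2 * Real.exp 1)⁻¹ := by
            apply mul_lt_mul_of_pos_left h2 (Real.exp_pos 1)
        _ = 1 / 2 := by field_simp
    have := (treeT_sub_self_bound hz.1.le (by linarith)).2
    have hden : (1:ℝ)/2 ≤ 1 - Real.exp 1 * z := by linarith
    have hnum : (0:ℝ) ≤ (Real.exp 1 * z)^2 := by positivity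
    have : (Real.exp 1 * z)^2 / (1 - Real.exp 1 * z) ≤ 2 * (Real.exp 1 * z)^2 := by
      rw [div_le_iff₀ (by linarith)]
      nlinarith
    linarith [this, (treeT_sub_self_bound hz.1.le (by linarith)).2]
  have hlow : ∀ z ∈ Set.Ioo (0:ℝ) ((2 * Real.exp 1)⁻¹), (0:ℝ) ≤ treeT z :=
    fun z hz => treeT_nonneg hz.1.le
  have hmem : Set.Ioo (0:ℝ) ((2 * Real.exp 1)⁻¹) ∈ nhdsWithin (0:ℝ) (Set.Ioi 0) :=
    Ioo_mem_nhdsGT_of_mem ⟨le_rfl, by positivity⟩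
  apply tendsto_of_tendsto_of_tendsto_of_le_of_le'
    (tendsto_const_nhds : Filter.Tendsto (fun _ : ℝ => (0:ℝ)) _ (nhds 0))
    (f := treeT) (h := fun z => z + 2 * (Real.exp 1 * z)^2) ?_ ?_ ?_
  · have hcont : Continuous (fun z : ℝ => z + 2 * (Real.exp 1 * z)^2) := by continuity
    have : Filter.Tendsto (fun z : ℝ => z + 2 * (Real.exp 1 * z)^2) (nhds 0) (nhds 0) := by
      have := hcont.tendsto 0
      simpa using this
    exact this.mono_left nhdsWithin_le_nhds
  · exact Filter.eventually_of_mem hmem hlow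
  · exact Filter.eventually_of_mem hmem hbound

lemma treeT_div_tendsto_one :
    Filter.Tendsto (fun z => treeT z / z) (nhdsWithin 0 (Set.Ioi 0)) (nhds 1) := by
  have hmem : Set.Ioo (0:ℝ) ((2 * Real.exp 1)⁻¹) ∈ nhdsWithin (0:ℝ) (Set.Ioi 0) :=
    Ioo_mem_nhdsGT_of_mem ⟨le_rfl, by positivity⟩
  apply tendsto_of_tendsto_of_tendsto_of_le_of_le'
    (g := fun _ : ℝ => (1:ℝ)) (h := fun z => 1 + 2 * Real.exp 1 ^ 2 * z)
    tendsto_const_nhds ?_ ?_ ?_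
  · have hcont : Continuous (fun z : ℝ => 1 + 2 * Real.exp 1 ^ 2 * z) := by continuity
    have : Filter.Tendsto (fun z : ℝ => 1 + 2 * Real.exp 1 ^ 2 * z) (nhds 0) (nhds 1) := by
      have := hcont.tendsto 0
      simpa using this
    exact this.mono_left nhdsWithin_le_nhds
  · apply Filter.eventually_of_mem hmem
    intro z hz
    have hez : Real.exp 1 * z < 1 := by
      have h2 : z < (2 * Real.exp 1)⁻¹ := hz.2
      have : Real.exp 1 * z < Real.exp 1 * (2 * Real.exp 1)⁻¹ := by
        apply mul_lt_mul_of_pos_left h2 (Real.exp_pos 1)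
      have heq : Real.exp 1 * (2 * Real.exp 1)⁻¹ = 1/2 := by field_simp
      linarith [heq ▸ this]
    have := (treeT_sub_self_bound hz.1.le hez).1
    show (1:ℝ) ≤ treeT z / z
    rw [le_div_iff₀ hz.1]
    linarith
  · apply Filter.eventually_of_mem hmem
    intro z hz
    have hez : Real.exp 1 * z < 1/2 := by
      have h2 : z < (2 * Real.exp 1)⁻¹ := hz.2
      have : Real.exp 1 * z < Real.exp 1 * (2 * Real.exp 1)⁻¹ := by
        apply mul_lt_mul_of_pos_left h2 (Real.exp_pos 1)
      have heq : Real.exp 1 * (2 * Real.exp 1)⁻¹ = 1/2 := by field_simp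
      linarith [heq ▸ this]
    have hub := (treeT_sub_self_bound hz.1.le (by linarith)).2
    have hden : (1:ℝ)/2 ≤ 1 - Real.exp 1 * z := by linarith
    have h3 : (Real.exp 1 * z)^2 / (1 - Real.exp 1 * z) ≤ 2 * (Real.exp 1 * z)^2 := by
      rw [div_le_iff₀ (by linarith)]
      nlinarith [sq_nonneg (Real.exp 1 * z)]
    show treeT z / z ≤ 1 + 2 * Real.exp 1 ^ 2 * z
    rw [div_le_iff₀ hz.1]
    have hzz : (Real.exp 1 * z)^2 = Real.exp 1 ^2 * z * z := by ring
    nlinarith [hub, h3, hzz]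

/-- The fundamental Lambert equation for the tree function on `(0, 1/e)`. -/
lemma treeT_lambert {x : ℝ} (hx0 : 0 < x) (hex : Real.exp 1 * x < 1) :
    treeT x * Real.exp (-treeT x) = x := by
  have hepos := Real.exp_pos 1
  set c : ℝ := (Real.exp 1)⁻¹ with hc
  have hc0 : 0 < c := by positivity
  have hxc : x < c := by
    rw [hc, inv_eq_one_div, lt_div_iff₀ hepos]
    nlinarith [hex]
  set r : ℝ := (x + c) / 2 with hr
  have hxr : x < r := by rw [hr]; linarith
  have hrc : r < c := by rw [hr]; linarith
  have hr0 : 0 < r := lt_trans hx0 hxr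
  have hre : Real.exp 1 * r < 1 := by
    have h1 : Real.exp 1 * r < Real.exp 1 * c := mul_lt_mul_of_pos_left hrc hepos
    have h2 : Real.exp 1 * c = 1 := by rw [hc]; field_simp
    linarith
  set Φ : ℝ → ℝ := fun z => treeT z * Real.exp (-treeT z) / z with hΦ
  have hΦd : ∀ z ∈ Set.Ioo (0:ℝ) r, HasDerivAt Φ 0 z := by
    intro z hz
    have hz0 : 0 < z := hz.1
    have hzc : Real.exp 1 * z < 1 := by
      have := mul_lt_mul_of_pos_left hz.2 hepos
      linarith [hre]
    have hTd := treeT_hasDerivAt hr0 hre ⟨by linarith, hz.2⟩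
    have hstar0 := star_identity hz0.le hzc
    rw [show (∑' n, tc n * z ^ n) = treeT z from rfl] at hstar0
    set W := treeT z with hW
    set D := ∑' n, tc n * ((n:ℝ) * z ^ (n-1)) with hD
    set A := ∑' (n : ℕ), (n:ℝ) * tc n * z ^ n with hA
    have hzD : z * D = A := by
      rw [hD, hA, ← tsum_mul_left]
      apply tsum_congr
      intro n
      rcases Nat.eq_zero_or_pos n with rfl | hn
      · simp
      · have hzz : z * z^(n-1) = z^n := by
          rw [← pow_succ']
          congr 1
          omega
        calc z * (tc n * ((n:ℝ) * z^(n-1))) = (n:ℝ) * tc n * (z * z^(n-1)) := by ring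
          _ = (n:ℝ) * tc n * z^n := by rw [hzz]
    have hexp : HasDerivAt (fun y => Real.exp (-treeT y)) (Real.exp (-W) * -D) z :=
      (hTd.neg).exp
    have hN : HasDerivAt (fun y => treeT y * Real.exp (-treeT y))
        (D * Real.exp (-W) + W * (Real.exp (-W) * -D)) z := hTd.mul hexp
    have hdiv := hN.div (hasDerivAt_id' z) (ne_of_gt hz0)
    have hnum : ((D * Real.exp (-W) + W * (Real.exp (-W) * -D)) * z - W * Real.exp (-W) * 1)
        / z ^ 2 = 0 := by
      have hzero : (D * Real.exp (-W) + W * (Real.exp (-W) * -D)) * z - W * Real.exp (-W) * 1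
          = 0 := by
        linear_combination Real.exp (-W) * ((1 - W) * hzD - hstar0)
      rw [hzero, zero_div]
    rw [hnum] at hdiv
    exact hdiv
  have hconst : ∀ a ∈ Set.Ioo (0:ℝ) x, Φ x = Φ a := by
    intro a ha
    have hsub : Set.Icc a x ⊆ Set.Ioo 0 r := fun y hy =>
      ⟨lt_of_lt_of_le ha.1 hy.1, lt_of_le_of_lt hy.2 hxr⟩
    have hcont : ContinuousOn Φ (Set.Icc a x) := fun y hy =>
      ((hΦd y (hsub hy)).continuousAt).continuousWithinAt
    have hderiv : ∀ y ∈ Set.Ico a x, HasDerivWithinAt Φ 0 (Set.Ici y) y := fun y hy =>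
      (hΦd y (hsub ⟨hy.1, hy.2.le⟩)).hasDerivWithinAt
    exact constant_of_has_deriv_right_zero hcont hderiv x ⟨ha.2.le, le_rfl⟩
  have hlim_const : Filter.Tendsto Φ (nhdsWithin 0 (Set.Ioi 0)) (nhds (Φ x)) := by
    apply Filter.Tendsto.congr' ?_ (tendsto_const_nhds : Filter.Tendsto (fun _ : ℝ => Φ x) _ _)
    filter_upwards [Ioo_mem_nhdsGT_of_mem (⟨le_rfl, hx0⟩ : (0:ℝ) ∈ Set.Ico 0 x)] with a ha
    exact hconst a ha
  have hlim_one : Filter.Tendsto Φ (nhdsWithin 0 (Set.Ioi 0)) (nhds 1) := by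
    have h2 : Filter.Tendsto (fun z => Real.exp (-treeT z)) (nhdsWithin 0 (Set.Ioi 0)) (nhds 1) := by
      have h3 : Filter.Tendsto (fun z => -treeT z) (nhdsWithin 0 (Set.Ioi 0)) (nhds 0) := by
        simpa using treeT_tendsto_zero.neg
      have := (Real.continuous_exp.tendsto 0).comp h3
      simpa [Function.comp_def] using this
    have := treeT_div_tendsto_one.mul h2
    rw [mul_one] at this
    apply this.congr
    intro z
    rw [hΦ]
    ring
  have hΦx : Φ x = 1 := tendsto_nhds_unique hlim_const hlim_one
  rw [hΦ] at hΦx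
  field_simp at hΦx
  linarith [hΦx]

lemma treeT_continuousOn {b : ℝ} (hb0 : 0 ≤ b) (hbe : Real.exp 1 * b < 1) :
    ContinuousOn treeT (Set.Icc 0 b) := by
  have hepos := Real.exp_pos 1
  have hbc : b < (Real.exp 1)⁻¹ := by
    rw [inv_eq_one_div, lt_div_iff₀ hepos]
    nlinarith [hbe]
  set r : ℝ := (b + (Real.exp 1)⁻¹) / 2 with hr
  have hr0 : 0 < r := by rw [hr]; positivity
  have hbr : b < r := by rw [hr]; linarith
  have hre : Real.exp 1 * r < 1 := by
    have h1 : Real.exp 1 * r < Real.exp 1 * (Real.exp 1)⁻¹ := by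
      apply mul_lt_mul_of_pos_left ?_ hepos
      rw [hr]; linarith
    have h2 : Real.exp 1 * (Real.exp 1)⁻¹ = 1 := by field_simp
    linarith
  intro y hy
  exact ((treeT_hasDerivAt hr0 hre ⟨by linarith [hy.1], by linarith [hy.2]⟩).continuousAt).continuousWithinAt

lemma treeT_le_one {x : ℝ} (hx0 : 0 ≤ x) (hex : Real.exp 1 * x < 1) : treeT x ≤ 1 := by
  have hepos := Real.exp_pos 1
  by_contra h
  push_neg at h
  have hcont : ContinuousOn treeT (Set.Icc 0 x) := treeT_continuousOn hx0 hex
  have h1 : (1:ℝ) ∈ Set.Icc (treeT 0) (treeT x) := by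
    rw [treeT_zero]; exact ⟨zero_le_one, h.le⟩
  obtain ⟨z, hz, hz1⟩ := intermediate_value_Icc hx0 hcont h1
  have hz0 : 0 < z := by
    rcases eq_or_lt_of_le hz.1 with heq | hlt
    · exfalso
      rw [← heq, treeT_zero] at hz1
      norm_num at hz1
    · exact hlt
  have hez : Real.exp 1 * z < 1 := by
    have : Real.exp 1 * z ≤ Real.exp 1 * x := mul_le_mul_of_nonneg_left hz.2 hepos.le
    linarith
  have hlam := treeT_lambert hz0 hez
  rw [hz1, one_mul] at hlam
  have hzc : z = (Real.exp 1)⁻¹ := by rw [← hlam, Real.exp_neg]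
  have hxc : x < (Real.exp 1)⁻¹ := by
    rw [inv_eq_one_div, lt_div_iff₀ hepos]
    nlinarith [hex]
  linarith [hz.2, hzc ▸ hz.2]

lemma phi_strictMonoOn : StrictMonoOn (fun w : ℝ => w * Real.exp (-w)) (Set.Icc 0 1) := by
  apply strictMonoOn_of_deriv_pos (convex_Icc 0 1)
  · have : Continuous (fun w : ℝ => w * Real.exp (-w)) := by continuity
    exact this.continuousOn
  · intro w hw
    rw [interior_Icc] at hw
    have hd : HasDerivAt (fun w : ℝ => w * Real.exp (-w))
        (1 * Real.exp (-w) + w * (Real.exp (-w) * -1)) w :=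
      (hasDerivAt_id' w).mul ((hasDerivAt_id' w).neg.exp)
    rw [hd.deriv]
    have hep : 0 < Real.exp (-w) := Real.exp_pos _
    nlinarith [hw.1, hw.2, hep]

lemma treeT_mono {x y : ℝ} (hx : 0 ≤ x) (hxy : x ≤ y) (hey : Real.exp 1 * y < 1) :
    treeT x ≤ treeT y := by
  have hex : Real.exp 1 * x < 1 := by
    have : Real.exp 1 * x ≤ Real.exp 1 * y :=
      mul_le_mul_of_nonneg_left hxy (Real.exp_pos 1).le
    linarith
  exact Summable.tsum_le_tsum
    (fun n => mul_le_mul_of_nonneg_left (pow_le_pow_left₀ hx hxy n) (tc_nonneg n))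
    (summable_tc hx hex) (summable_tc (le_trans hx hxy) hey)

lemma hasSum_tc_inv_e : HasSum (fun n => tc n * ((Real.exp 1)⁻¹) ^ n) 1 := by
  have hepos := Real.exp_pos 1
  set c : ℝ := (Real.exp 1)⁻¹ with hc
  have hc0 : 0 < c := by positivity
  have hnonneg : ∀ n, 0 ≤ tc n * c ^ n :=
    fun n => mul_nonneg (tc_nonneg n) (pow_nonneg hc0.le n)
  have hezlt : ∀ z ∈ Set.Ioo (0:ℝ) c, Real.exp 1 * z < 1 := by
    intro z hz
    have h1 : Real.exp 1 * z < Real.exp 1 * c := mul_lt_mul_of_pos_left hz.2 hepos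
    have h2 : Real.exp 1 * c = 1 := by rw [hc]; field_simp
    linarith
  have hpartial : ∀ N, ∑ n ∈ range N, tc n * c ^ n ≤ 1 := by
    intro N
    have hcontN : Continuous (fun z : ℝ => ∑ n ∈ range N, tc n * z ^ n) := by
      apply continuous_finset_sum
      intro i _
      exact continuous_const.mul (continuous_pow i)
    have hbound : ∀ z ∈ Set.Ioo (0:ℝ) c, ∑ n ∈ range N, tc n * z ^ n ≤ 1 := by
      intro z hz
      have hez := hezlt z hz
      calc ∑ n ∈ range N, tc n * z ^ n ≤ treeT z :=
            Summable.sum_le_tsum (range N)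
              (fun i _ => mul_nonneg (tc_nonneg i) (pow_nonneg hz.1.le i))
              (summable_tc hz.1.le hez)
        _ ≤ 1 := treeT_le_one hz.1.le hez
    have htends : Filter.Tendsto (fun z => ∑ n ∈ range N, tc n * z^n)
        (nhdsWithin c (Set.Iio c)) (nhds (∑ n ∈ range N, tc n * c^n)) :=
      (hcontN.tendsto c).mono_left nhdsWithin_le_nhds
    apply le_of_tendsto htends
    filter_upwards [Ioo_mem_nhdsLT_of_mem (⟨hc0, le_rfl⟩ : c ∈ Set.Ioc 0 c)] with z hz
    exact hbound z hz
  have hsummable : Summable (fun n => tc n * c ^ n) :=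
    summable_of_sum_range_le hnonneg hpartial
  have hle : ∑' n, tc n * c^n ≤ 1 := Summable.tsum_le_of_sum_range_le hsummable hpartial
  have hge : ∀ w ∈ Set.Ico (0:ℝ) 1, w ≤ ∑' n, tc n * c ^ n := by
    intro w hw
    set z := w * Real.exp (-w) with hzdef
    have hz0 : 0 ≤ z := mul_nonneg hw.1 (Real.exp_pos _).le
    have hzc : z < c := by
      have h1 : z < 1 * Real.exp (-1) :=
        phi_strictMonoOn ⟨hw.1, hw.2.le⟩ ⟨zero_le_one, le_rfl⟩ hw.2
      rw [one_mul, Real.exp_neg] at h1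
      rw [hc]
      exact h1
    have hez : Real.exp 1 * z < 1 := by
      rcases eq_or_lt_of_le hz0 with heq | hlt
      · rw [← heq]; norm_num
      · exact hezlt z ⟨hlt, hzc⟩
    have hTz : treeT z = w := by
      rcases eq_or_lt_of_le hw.1 with heq | hwpos
      · have : z = 0 := by rw [hzdef, ← heq]; ring
        rw [this, treeT_zero, ← heq]
      · have hzpos : 0 < z := mul_pos hwpos (Real.exp_pos _)
        have hlam := treeT_lambert hzpos hez
        apply phi_strictMonoOn.injOn ⟨treeT_nonneg hz0, treeT_le_one hz0 hez⟩
          ⟨hw.1, hw.2.le⟩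
        show treeT z * Real.exp (-treeT z) = w * Real.exp (-w)
        rw [hlam]
    calc w = treeT z := hTz.symm
      _ ≤ ∑' n, tc n * c^n := Summable.tsum_le_tsum
          (fun n => mul_le_mul_of_nonneg_left (pow_le_pow_left₀ hz0 hzc.le n) (tc_nonneg n))
          (summable_tc hz0 hez) hsummable
  have h1 : (1:ℝ) ≤ ∑' n, tc n * c^n := by
    by_contra hlt
    push_neg at hlt
    have hL0 : 0 ≤ ∑' n, tc n * c^n := tsum_nonneg hnonneg
    have := hge ((∑' n, tc n * c^n + 1)/2) ⟨by linarith, by linarith⟩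
    linarith
  have heq : ∑' n, tc n * c^n = 1 := le_antisymm hle h1
  exact heq ▸ hsummable.hasSum

/-- For `p ∈ [0,1]`, the tree series `T(p/e) = ∑_{n=1}^∞ (n^{n-1}/n!) (p/e)^n`
converges (the sum over `n ≥ 1` is written as a sum over `n = m+1`, `m ≥ 0`),
and its sum `w` satisfies the Lambert-function equation `w e^{-w} = p/e`;
in particular the sum is `1` when `p = 1`. -/
theorem tree_series_lambert (p : ℝ) (hp : p ∈ Set.Icc (0 : ℝ) 1) :
    ∃ w : ℝ,
      HasSum (fun m : ℕ => ((m + 1 : ℝ) ^ m / (Nat.factorial (m + 1) : ℝ)) *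
        (p / Real.exp 1) ^ (m + 1)) w ∧
      w * Real.exp (-w) = p / Real.exp 1 ∧
      (p = 1 → w = 1) := by
  obtain ⟨hp0, hp1⟩ := hp
  have hepos := Real.exp_pos 1
  set x : ℝ := p / Real.exp 1 with hx
  have hterm : ∀ (m : ℕ) (y : ℝ), ((m + 1 : ℝ) ^ m / (Nat.factorial (m + 1) : ℝ)) * y ^ (m + 1)
      = tc (m + 1) * y ^ (m + 1) := by
    intro m y
    congr 1
    unfold tc
    rw [if_neg (Nat.succ_ne_zero m)]
    push_cast [Nat.add_sub_cancel]
    norm_num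
  have hx0 : 0 ≤ x := div_nonneg hp0 hepos.le
  by_cases hp1' : p = 1
  · refine ⟨1, ?_, ?_, fun _ => rfl⟩
    · have hxe : x = (Real.exp 1)⁻¹ := by rw [hx, hp1', one_div]
      have hsum := hasSum_tc_inv_e
      have hshift := (hasSum_nat_add_iff' (f := fun n => tc n * ((Real.exp 1)⁻¹) ^ n) 1).mpr hsum
      have h0 : ∑ i ∈ range 1, tc i * ((Real.exp 1)⁻¹) ^ i = 0 := by
        simp [tc]
      rw [h0, sub_zero] at hshift
      have hfun : (fun m : ℕ => ((m + 1 : ℝ) ^ m / (Nat.factorial (m + 1) : ℝ)) * x ^ (m + 1))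
          = fun n : ℕ => tc (n + 1) * ((Real.exp 1)⁻¹) ^ (n + 1) := by
        funext m
        rw [hterm m x, hxe]
      rw [hfun]
      exact hshift
    · rw [one_mul, Real.exp_neg, hx, hp1', one_div]
  · have hplt : p < 1 := lt_of_le_of_ne hp1 hp1'
    have hex : Real.exp 1 * x < 1 := by
      have h1 : Real.exp 1 * x = p := by rw [hx]; field_simp
      linarith
    refine ⟨treeT x, ?_, ?_, fun h => absurd h hp1'⟩
    · have hsum : HasSum (fun n => tc n * x ^ n) (treeT x) := (summable_tc hx0 hex).hasSum
      have hshift := (hasSum_nat_add_iff' (f := fun n => tc n * x ^ n) 1).mpr hsum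
      have h0 : ∑ i ∈ range 1, tc i * x ^ i = 0 := by simp [tc]
      rw [h0, sub_zero] at hshift
      have hfun : (fun m : ℕ => ((m + 1 : ℝ) ^ m / (Nat.factorial (m + 1) : ℝ)) * x ^ (m + 1))
          = fun n : ℕ => tc (n + 1) * x ^ (n + 1) := by
        funext m
        rw [hterm m x]
      rw [hfun]
      exact hshift
    · rcases eq_or_lt_of_le hx0 with heq | hxpos
      · rw [← heq, treeT_zero]
        simp
      · exact treeT_lambert hxpos hex
end

section
/- There exists a constant M > 0 such that for all real x > 1 and y ∈ (0, 1) satisfying x·y = artanh(y), the quantities 1 - x + x y and 1 - x + x y² are positive and |x(x+1)(1-y) + log(1 - x + x y) - (1/2) log(1 - x + x y²)| ≤ M. -/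
/-- The inverse hyperbolic tangent, `artanh y = (1/2) log((1+y)/(1-y))`. -/
noncomputable def artanh (y : ℝ) : ℝ := (1 / 2) * Real.log ((1 + y) / (1 - y))

/-- Derivative of `log(1+u) - log(1-u)`. -/
lemma hasDerivAt_loglog (t : ℝ) (h1 : -1 < t) (h2 : t < 1) :
    HasDerivAt (fun u : ℝ => Real.log (1+u) - Real.log (1-u)) (1/(1+t) + 1/(1-t)) t := by
  have hp : (0:ℝ) < 1 + t := by linarith
  have hm : (0:ℝ) < 1 - t := by linarith
  have h1' : HasDerivAt (fun u : ℝ => Real.log (1+u)) (1/(1+t)) t := by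
    have := ((hasDerivAt_id t).const_add 1).log hp.ne'
    simpa using this
  have h2' : HasDerivAt (fun u : ℝ => Real.log (1-u)) (-(1/(1-t))) t := by
    have := ((hasDerivAt_id t).const_sub 1).log hm.ne'
    simpa [neg_div] using this
  exact (h1'.sub h2').congr_deriv (by ring)

lemma hasDerivAt_fu (t : ℝ) (h1 : -1 < t) (h2 : t < 1) :
    HasDerivAt (fun u : ℝ => u + u^3/(3*(1-u^2)) - (1/2)*(Real.log (1+u) - Real.log (1-u)))
      (1 + (3*t^2*(3*(1-t^2)) - t^3*(3*(-(2*t))))/(3*(1-t^2))^2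
        - (1/2)*(1/(1+t) + 1/(1-t))) t := by
  have hden : (3*(1-t^2)) ≠ 0 := by nlinarith
  have hnum : HasDerivAt (fun u : ℝ => u^3) (3*t^2) t := by
    simpa using hasDerivAt_pow 3 t
  have hd : HasDerivAt (fun u : ℝ => 3*(1-u^2)) (3*(-(2*t))) t := by
    have hsq : HasDerivAt (fun u : ℝ => u^2) (2*t) t := by simpa using hasDerivAt_pow 2 t
    exact (hsq.const_sub 1).const_mul 3
  have hdiv := hnum.div hd hden
  exact ((hasDerivAt_id t).add hdiv).sub ((hasDerivAt_loglog t h1 h2).const_mul (1/2))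

/-- Upper bound `artanh y ≤ y + y³/(3(1-y²))` on `[0,1)`. -/
lemma artanh_upper {y : ℝ} (h0 : 0 ≤ y) (h1 : y < 1) :
    (1/2) * (Real.log (1+y) - Real.log (1-y)) ≤ y + y^3/(3*(1-y^2)) := by
  set f : ℝ → ℝ := fun u => u + u^3/(3*(1-u^2)) - (1/2)*(Real.log (1+u) - Real.log (1-u)) with hf
  have key : ∀ t ∈ Set.Icc (0:ℝ) y, HasDerivAt f
      (1 + (3*t^2*(3*(1-t^2)) - t^3*(3*(-(2*t))))/(3*(1-t^2))^2
        - (1/2)*(1/(1+t) + 1/(1-t))) t := by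
    intro t ht
    exact hasDerivAt_fu t (by linarith [ht.1]) (by linarith [ht.2])
  have hmono : MonotoneOn f (Set.Icc (0:ℝ) y) := by
    apply monotoneOn_of_deriv_nonneg (convex_Icc 0 y)
    · exact fun t ht => (key t ht).continuousAt.continuousWithinAt
    · rw [interior_Icc]
      exact fun t ht => ((key t (Set.mem_Icc_of_Ioo ht)).differentiableAt).differentiableWithinAt
    · rw [interior_Icc]
      intro t ht
      rw [(key t (Set.mem_Icc_of_Ioo ht)).deriv]
      have ht0 : 0 < t := ht.1
      have ht1 : t < 1 := lt_of_lt_of_le ht.2 h1.le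
      have h2 : (0:ℝ) < 1 - t^2 := by nlinarith
      have heq : 1 + (3*t^2*(3*(1-t^2)) - t^3*(3*(-(2*t))))/(3*(1-t^2))^2
          - (1/2)*(1/(1+t) + 1/(1-t)) = 2*t^4/(3*(1-t^2)^2) := by
        have hp : (0:ℝ) < 1 + t := by linarith
        have hm : (0:ℝ) < 1 - t := by linarith
        field_simp
        ring
      rw [heq]
      positivity
  have h00 : f 0 = 0 := by simp [hf]
  have := hmono (Set.left_mem_Icc.mpr h0) (Set.right_mem_Icc.mpr h0) h0
  rw [h00] at this
  simp only [hf] at this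
  linarith

/-- Lower bound `y + y³/3 ≤ artanh y` on `[0,1)`. -/
lemma artanh_lower {y : ℝ} (h0 : 0 ≤ y) (h1 : y < 1) :
    y + y^3/3 ≤ (1/2) * (Real.log (1+y) - Real.log (1-y)) := by
  set f : ℝ → ℝ := fun u => (1/2)*(Real.log (1+u) - Real.log (1-u)) - (u + u^3/3) with hf
  have key : ∀ t ∈ Set.Icc (0:ℝ) y, HasDerivAt f
      ((1/2)*(1/(1+t) + 1/(1-t)) - (1 + 3*t^2/3)) t := by
    intro t ht
    have h1t : -1 < t := by linarith [ht.1]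
    have h2t : t < 1 := by linarith [ht.2]
    have hcub : HasDerivAt (fun u : ℝ => u + u^3/3) (1 + 3*t^2/3) t := by
      have hnum : HasDerivAt (fun u : ℝ => u^3) (3*t^2) t := by
        simpa using hasDerivAt_pow 3 t
      exact (hasDerivAt_id t).add (hnum.div_const 3)
    exact ((hasDerivAt_loglog t h1t h2t).const_mul (1/2)).sub hcub
  have hmono : MonotoneOn f (Set.Icc (0:ℝ) y) := by
    apply monotoneOn_of_deriv_nonneg (convex_Icc 0 y)
    · exact fun t ht => (key t ht).continuousAt.continuousWithinAt
    · rw [interior_Icc]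
      exact fun t ht => ((key t (Set.mem_Icc_of_Ioo ht)).differentiableAt).differentiableWithinAt
    · rw [interior_Icc]
      intro t ht
      rw [(key t (Set.mem_Icc_of_Ioo ht)).deriv]
      have ht0 : 0 < t := ht.1
      have ht1 : t < 1 := lt_of_lt_of_le ht.2 h1.le
      have h2 : (0:ℝ) < 1 - t^2 := by nlinarith
      have hp : (0:ℝ) < 1 + t := by linarith
      have hm : (0:ℝ) < 1 - t := by linarith
      have heq : (1/2)*(1/(1+t) + 1/(1-t)) - (1 + 3*t^2/3) = t^4/(1-t^2) := by
        field_simp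
        ring
      rw [heq]
      positivity
  have h00 : f 0 = 0 := by simp [hf]
  have := hmono (Set.left_mem_Icc.mpr h0) (Set.right_mem_Icc.mpr h0) h0
  rw [h00] at this
  simp only [hf] at this
  linarith

lemma aux_hup4 {a y : ℝ} (hy0 : 0 < y) (hy1 : y < 1)
    (hup : a ≤ y + y^3/(3*(1-y^2))) : a * (3*(1-y^2)) ≤ 3*y - 2*y^3 := by
  have hy2 : (0:ℝ) < 1 - y^2 := by nlinarith
  have h := mul_le_mul_of_nonneg_right hup (by positivity : (0:ℝ) ≤ 3*(1-y^2))
  have heq : (y + y^3/(3*(1-y^2))) * (3*(1-y^2)) = 3*y - 2*y^3 := by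
    field_simp; ring
  rw [heq] at h; exact h

lemma aux_PQ {a y : ℝ} (hy0 : 0 < y) (hy1 : y < 1)
    (hup : a ≤ y + y^3/(3*(1-y^2))) (hlo : y + y^3/3 ≤ a) :
    (2/3)*y^2 ≤ y - a*(1-y) ∧ y - a*(1-y) ≤ y^2 ∧
      (2/3)*y^3 ≤ y - a*(1-y^2) ∧ y - a*(1-y^2) ≤ y^3 := by
  have hy2 : (0:ℝ) < 1 - y^2 := by nlinarith
  have hy3 : (0:ℝ) < y^3 := by positivity
  have hup4 := aux_hup4 hy0 hy1 hup
  refine ⟨?_, ?_, ?_, ?_⟩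
  · nlinarith [hup4, mul_pos hy0 hy0, (show (0:ℝ) < 1 + y by linarith)]
  · nlinarith [mul_le_mul_of_nonneg_right (show y ≤ a by linarith)
      (show (0:ℝ) ≤ 1 - y by linarith)]
  · linarith
  · nlinarith [mul_le_mul_of_nonneg_right hlo hy2.le, (show y^5 ≤ y^3 by nlinarith)]

lemma aux_xbound {x a y : ℝ} (hx : 1 < x) (hy0 : 0 < y) (hy1 : y < 1) (hxy : x*y = a)
    (hup : a ≤ y + y^3/(3*(1-y^2))) (hlo : y + y^3/3 ≤ a)
    (h2a : 2*a ≤ Real.log (2/(1-y))) :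
    x*(1-y) ≤ 1 ∧ x^2*(1-y) ≤ 8 := by
  have hy2 : (0:ℝ) < 1 - y^2 := by nlinarith
  have hup4 := aux_hup4 hy0 hy1 hup
  have hP := (aux_PQ hy0 hy1 hup hlo).1
  constructor
  · have h : y*(x*(1-y)) ≤ y*1 := by nlinarith [hP, hxy, mul_pos hy0 hy0]
    exact le_of_mul_le_mul_left h hy0
  · rcases le_or_gt y (1/2) with hc | hc
    · have h : y*(x*(1-y^2)) ≤ y*1 := by nlinarith [hup4, hxy, pow_pos hy0 3]
      have hxb : x*(1-y^2) ≤ 1 := le_of_mul_le_mul_left h hy0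
      have h34 : (3:ℝ)/4 ≤ 1-y^2 := by nlinarith
      have hxb2 : x ≤ 4/3 := by
        nlinarith [mul_le_mul_of_nonneg_left h34 (by linarith : (0:ℝ) ≤ x)]
      nlinarith [hxb2, hx, hy0, hy1]
    · set s := 2/(1-y) with hsdef
      have h1y : (0:ℝ) < 1 - y := by linarith
      have hs : (0:ℝ) < s := by positivity
      have hxa : x ≤ 2*a := by
        nlinarith [mul_pos (show (0:ℝ) < x by linarith)
          (show (0:ℝ) < 2*y - 1 by linarith), hxy]
      have hsq : Real.log s ≤ 2*Real.sqrt s := by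
        have h := Real.log_le_sub_one_of_pos (Real.sqrt_pos.mpr hs)
        rw [Real.log_sqrt hs.le] at h
        linarith [Real.sqrt_nonneg s]
      have hxs : x ≤ 2*Real.sqrt s := by linarith
      have hx2 : x^2 ≤ 4*s := by
        nlinarith [Real.sq_sqrt hs.le, Real.sqrt_nonneg s, hxs, hx]
      have hs1y : s*(1-y) = 2 := by rw [hsdef]; field_simp
      nlinarith [hx2, hs1y, hx, h1y, hs]

lemma aux_log {B C : ℝ} (hB : 0 < B) (hC : 0 < C)
    (h1 : 4/9*C ≤ B^2) (h2 : B^2 ≤ 3/2*C) :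
    -(5/8) ≤ Real.log B - (1/2)*Real.log C ∧
      Real.log B - (1/2)*Real.log C ≤ 1/4 := by
  have hrpos : 0 < B^2/C := by positivity
  have hrlo : (4/9:ℝ) ≤ B^2/C := by rw [le_div_iff₀ hC]; linarith
  have hrup : B^2/C ≤ (3/2:ℝ) := by rw [div_le_iff₀ hC]; linarith
  have hlog1 : Real.log (B^2/C) ≤ 1/2 := by
    have := Real.log_le_sub_one_of_pos hrpos; linarith
  have hlog2 : -(5/4) ≤ Real.log (B^2/C) := by
    have h := Real.log_le_sub_one_of_pos (show (0:ℝ) < 1/(B^2/C) by positivity)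
    rw [Real.log_div one_ne_zero hrpos.ne', Real.log_one] at h
    have : 1/(B^2/C) ≤ 9/4 := by rw [div_le_iff₀ hrpos]; linarith
    linarith
  have hlogeq : Real.log B - (1/2)*Real.log C = (1/2)*Real.log (B^2/C) := by
    rw [Real.log_div (by positivity) hC.ne', Real.log_pow]
    push_cast; ring
  rw [hlogeq]
  constructor <;> linarith

lemma aux_ratio {B C y : ℝ} (hy0 : 0 < y) (hBlo : 2/3*y ≤ B) (hBup : B ≤ y)
    (hClo : 2/3*y^2 ≤ C) (hCup : C ≤ y^2) : 4/9*C ≤ B^2 ∧ B^2 ≤ 3/2*C := by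
  constructor
  · nlinarith [mul_nonneg (show (0:ℝ) ≤ B - 2/3*y by linarith)
      (show (0:ℝ) ≤ B + 2/3*y by linarith), hCup]
  · nlinarith [mul_nonneg (show (0:ℝ) ≤ y - B by linarith)
      (show (0:ℝ) ≤ y + B by linarith), hClo]

set_option maxHeartbeats 1000000 in
/-- There is `M > 0` such that for all `x > 1` and `y ∈ (0,1)` with
`x y = artanh y`, the quantities `1 - x + xy` and `1 - x + xy²` are positive and
`|x(x+1)(1-y) + log(1-x+xy) - (1/2) log(1-x+xy²)| ≤ M`
(boundedness of the function `a` of Bender, Canfield and McKay). -/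
theorem BCM_a_bounded :
    ∃ M : ℝ, 0 < M ∧ ∀ x : ℝ, 1 < x → ∀ y : ℝ, y ∈ Set.Ioo (0 : ℝ) 1 →
      x * y = artanh y →
      0 < 1 - x + x * y ∧ 0 < 1 - x + x * y ^ 2 ∧
        |x * (x + 1) * (1 - y) + Real.log (1 - x + x * y) -
          (1 / 2) * Real.log (1 - x + x * y ^ 2)| ≤ M := by
  refine ⟨100, by norm_num, ?_⟩
  intro x hx y hy hxy
  obtain ⟨hy0, hy1⟩ := hy
  have h1y : (0:ℝ) < 1 - y := by linarith
  have h1y' : (0:ℝ) < 1 + y := by linarith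
  have ha : artanh y = (1/2) * (Real.log (1+y) - Real.log (1-y)) := by
    rw [artanh, Real.log_div (by linarith) (by linarith)]
  rw [ha] at hxy
  have hup : (1/2) * (Real.log (1+y) - Real.log (1-y)) ≤ y + y^3/(3*(1-y^2)) :=
    artanh_upper hy0.le hy1
  have hlo : y + y^3/3 ≤ (1/2) * (Real.log (1+y) - Real.log (1-y)) :=
    artanh_lower hy0.le hy1
  obtain ⟨hPlo, hPup, hQlo, hQup⟩ := aux_PQ hy0 hy1 hup hlo
  have h2a : 2*((1/2) * (Real.log (1+y) - Real.log (1-y))) ≤ Real.log (2/(1-y)) := by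
    have hl1 : Real.log (1+y) ≤ Real.log 2 :=
      Real.log_le_log (by linarith) (by linarith)
    have hl2 : Real.log (2/(1-y)) = Real.log 2 - Real.log (1-y) :=
      Real.log_div two_ne_zero h1y.ne'
    linarith
  obtain ⟨hx1y, hx2y⟩ := aux_xbound hx hy0 hy1 hxy hup hlo h2a
  have hBy : y * (1 - x + x*y) =
      y - ((1/2) * (Real.log (1+y) - Real.log (1-y)))*(1-y) := by rw [← hxy]; ring
  have hCy : y * (1 - x + x*y^2) =
      y - ((1/2) * (Real.log (1+y) - Real.log (1-y)))*(1-y^2) := by rw [← hxy]; ring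
  have hBlo : (2/3)*y ≤ 1 - x + x*y := by
    have h : y * ((2/3)*y) ≤ y * (1 - x + x*y) := by rw [hBy]; linarith
    exact le_of_mul_le_mul_left h hy0
  have hBup : 1 - x + x*y ≤ y := by
    have h : y * (1 - x + x*y) ≤ y * y := by rw [hBy]; linarith
    exact le_of_mul_le_mul_left h hy0
  have hClo : (2/3)*y^2 ≤ 1 - x + x*y^2 := by
    have h : y * ((2/3)*y^2) ≤ y * (1 - x + x*y^2) := by rw [hCy]; linarith
    exact le_of_mul_le_mul_left h hy0
  have hCup : 1 - x + x*y^2 ≤ y^2 := by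
    have h : y * (1 - x + x*y^2) ≤ y * y^2 := by rw [hCy]; linarith
    exact le_of_mul_le_mul_left h hy0
  have hB : 0 < 1 - x + x*y := lt_of_lt_of_le (by positivity) hBlo
  have hC : 0 < 1 - x + x*y^2 := lt_of_lt_of_le (by positivity) hClo
  refine ⟨hB, hC, ?_⟩
  obtain ⟨hr1, hr2⟩ := aux_ratio hy0 hBlo hBup hClo hCup
  obtain ⟨hL1, hL2⟩ := aux_log hB hC hr1 hr2
  have hAlo : 0 ≤ x*(x+1)*(1-y) := by positivity
  have hAup : x*(x+1)*(1-y) ≤ 9 := by nlinarith [hx2y, hx1y]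
  rw [abs_le]
  constructor <;> [nlinarith [hL1, hAup]; nlinarith [hL2, hAlo]]
end

section
/- Let t = √(3e). For all real x > 1 and y ∈ (0, 1) satisfying x·y = artanh(y), one has 2 e^{-x} y^{1-x} / √(1 - y²) ≤ (2/e) · exp(-(1/3) y² log(y/t)). -/
namespace BCMaux

lemma uexp (m u : ℝ) (hm : 0 < m) (hu : 0 ≤ u) :
    Real.exp (-(m*u)) * u ≤ 1/(Real.exp 1 * m) := by
  have he : (0:ℝ) < Real.exp 1 := Real.exp_pos 1
  have h3 : m*u*Real.exp 1 ≤ Real.exp (m*u) := by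
    have h := mul_le_mul_of_nonneg_right
      (show m*u ≤ Real.exp (m*u-1) by linarith [Real.add_one_le_exp (m*u-1)]) he.le
    rwa [← Real.exp_add, sub_add_cancel] at h
  have key : Real.exp (-(m*u)) * (m*u*Real.exp 1) ≤ 1 := by
    have h := mul_le_mul_of_nonneg_left h3 (Real.exp_pos (-(m*u))).le
    rwa [← Real.exp_add, neg_add_cancel, Real.exp_zero] at h
  have hem : (0:ℝ) < Real.exp 1 * m := by positivity
  rw [le_div_iff₀ hem]
  calc Real.exp (-(m*u)) * u * (Real.exp 1 * m)
      = Real.exp (-(m*u)) * (m*u*Real.exp 1) := by ring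
    _ ≤ 1 := key

lemma core_head (m u : ℝ) (hm : 0 < m) (hu : 0 ≤ u) :
    Real.exp (-(m*u)) * (1/((m+2)*(m+3)) + u/(m+3))
      ≤ (m+2)^2/((m+3)^2*(m*(m+3))) := by
  have hm2 : (0:ℝ) < m + 2 := by linarith
  have hm3 : (0:ℝ) < m + 3 := by linarith
  have hE : (m+3)^2/(m+2)^2 ≤ Real.exp (2/(m+2)) := by
    have h1 : (m+3)/(m+2) ≤ Real.exp (1/(m+2)) := by
      have h2 := Real.add_one_le_exp (1/(m+2))
      have h3 : (m+3)/(m+2) = 1/(m+2) + 1 := by field_simp; ring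
      linarith
    have hp : (0:ℝ) ≤ (m+3)/(m+2) := by positivity
    calc (m+3)^2/(m+2)^2 = ((m+3)/(m+2))^2 := by rw [div_pow]
      _ ≤ (Real.exp (1/(m+2)))^2 := by gcongr
      _ = Real.exp (2/(m+2)) := by rw [sq, ← Real.exp_add]; ring_nf
  have hE' : (Real.exp (2/(m+2)))⁻¹ ≤ (m+2)^2/(m+3)^2 := by
    have hp : (0:ℝ) < (m+3)^2/(m+2)^2 := by positivity
    have h := one_div_le_one_div_of_le hp hE
    rw [one_div, one_div_div] at h
    exact h
  have hchain : 1/((m+2)*(m+3)) + u/(m+3)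
      ≤ Real.exp (m*u) * ((m+2)^2/((m+3)^2*(m*(m+3)))) := by
    calc 1/((m+2)*(m+3)) + u/(m+3)
        = 1/(m*(m+3)) * ((m/(m+2) - 1 + m*u) + 1) := by field_simp; ring
      _ ≤ 1/(m*(m+3)) * Real.exp (m/(m+2) - 1 + m*u) := by
          have h0 : (0:ℝ) ≤ 1/(m*(m+3)) := by positivity
          exact mul_le_mul_of_nonneg_left (Real.add_one_le_exp _) h0
      _ = 1/(m*(m+3)) * (Real.exp (m*u) * (Real.exp (2/(m+2)))⁻¹) := by
          have harg : m/(m+2) - 1 + m*u = m*u + -(2/(m+2)) := by field_simp; ring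
          rw [harg, Real.exp_add, Real.exp_neg]
      _ ≤ 1/(m*(m+3)) * (Real.exp (m*u) * ((m+2)^2/(m+3)^2)) := by
          have h0 : (0:ℝ) ≤ 1/(m*(m+3)) := by positivity
          have h1 : (0:ℝ) ≤ Real.exp (m*u) := (Real.exp_pos _).le
          exact mul_le_mul_of_nonneg_left (mul_le_mul_of_nonneg_left hE' h1) h0
      _ = Real.exp (m*u) * ((m+2)^2/((m+3)^2*(m*(m+3)))) := by
          have h1 : m*(m+3) ≠ 0 := by positivity
          have h2 : ((m+3):ℝ)^2 ≠ 0 := by positivity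
          field_simp
  have h := mul_le_mul_of_nonneg_left hchain (Real.exp_pos (-(m*u))).le
  calc Real.exp (-(m*u)) * (1/((m+2)*(m+3)) + u/(m+3))
      ≤ Real.exp (-(m*u)) * (Real.exp (m*u) * ((m+2)^2/((m+3)^2*(m*(m+3))))) := h
    _ = (m+2)^2/((m+3)^2*(m*(m+3))) := by
        rw [← mul_assoc, ← Real.exp_add, neg_add_cancel, Real.exp_zero, one_mul]

lemma core_tail (m u : ℝ) (hm : 0 < m) (hu : 0 ≤ u) :
    Real.exp (-(m*u)) * (1/((m+2)*(m+3)) + u/(m+3))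
      ≤ 1/((m+1)*(m+3)) + 1/(Real.exp 1 * (m*(m+2))) := by
  have hm1 : (0:ℝ) < m + 1 := by linarith
  have hm2 : (0:ℝ) < m + 2 := by linarith
  have hm3 : (0:ℝ) < m + 3 := by linarith
  have hE1 : Real.exp (-(m*u)) ≤ 1 := by
    rw [Real.exp_le_one_iff]
    nlinarith
  have h1 : Real.exp (-(m*u)) * (1/((m+2)*(m+3))) ≤ 1/((m+1)*(m+3)) := by
    calc Real.exp (-(m*u)) * (1/((m+2)*(m+3))) ≤ 1 * (1/((m+2)*(m+3))) :=
          mul_le_mul_of_nonneg_right hE1 (by positivity)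
      _ = 1/((m+2)*(m+3)) := by ring
      _ ≤ 1/((m+1)*(m+3)) := by
          apply one_div_le_one_div_of_le (by positivity)
          nlinarith
  have h2 : Real.exp (-(m*u)) * (u/(m+3)) ≤ 1/(Real.exp 1 * (m*(m+2))) := by
    have hux := uexp m u hm hu
    have he : (0:ℝ) < Real.exp 1 := Real.exp_pos 1
    calc Real.exp (-(m*u)) * (u/(m+3)) = (Real.exp (-(m*u)) * u) * (1/(m+3)) := by ring
      _ ≤ (1/(Real.exp 1 * m)) * (1/(m+3)) :=
          mul_le_mul_of_nonneg_right hux (by positivity)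
      _ = 1/(Real.exp 1 * (m*(m+3))) := by rw [div_mul_div_comm]; ring_nf
      _ ≤ 1/(Real.exp 1 * (m*(m+2))) := by
          apply one_div_le_one_div_of_le (by positivity)
          nlinarith
  calc Real.exp (-(m*u)) * (1/((m+2)*(m+3)) + u/(m+3))
      = Real.exp (-(m*u)) * (1/((m+2)*(m+3))) + Real.exp (-(m*u)) * (u/(m+3)) := by ring
    _ ≤ 1/((m+1)*(m+3)) + 1/(Real.exp 1 * (m*(m+2))) := add_le_add h1 h2

lemma head_n (n : ℕ) (u : ℝ) (hu : 0 ≤ u) :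
    Real.exp (-((2*(n:ℝ)+2)*u)) * (1/((2*(n:ℝ)+4)*(2*(n:ℝ)+5)) + u/(2*(n:ℝ)+5))
      ≤ (2*(n:ℝ)+4)^2 / ((2*(n:ℝ)+5)^2 * ((2*(n:ℝ)+2)*(2*(n:ℝ)+5))) := by
  have h := core_head (2*(n:ℝ)+2) u (by positivity) hu
  have e2 : (2*(n:ℝ)+2) + 2 = 2*(n:ℝ)+4 := by ring
  have e3 : (2*(n:ℝ)+2) + 3 = 2*(n:ℝ)+5 := by ring
  rw [e2, e3] at h
  exact h

lemma tail_n (n : ℕ) (u : ℝ) (hu : 0 ≤ u) :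
    Real.exp (-((2*(n:ℝ)+2)*u)) * (1/((2*(n:ℝ)+4)*(2*(n:ℝ)+5)) + u/(2*(n:ℝ)+5))
      ≤ (1/2) * (1/(2*(n:ℝ)+3) - 1/(2*(n:ℝ)+5))
        + (1/(2*Real.exp 1)) * (1/(2*(n:ℝ)+2) - 1/(2*(n:ℝ)+4)) := by
  have h := core_tail (2*(n:ℝ)+2) u (by positivity) hu
  have e1 : (2*(n:ℝ)+2) + 1 = 2*(n:ℝ)+3 := by ring
  have e2 : (2*(n:ℝ)+2) + 2 = 2*(n:ℝ)+4 := by ring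
  have e3 : (2*(n:ℝ)+2) + 3 = 2*(n:ℝ)+5 := by ring
  rw [e1, e2, e3] at h
  have heq : (1/2) * (1/(2*(n:ℝ)+3) - 1/(2*(n:ℝ)+5))
        + (1/(2*Real.exp 1)) * (1/(2*(n:ℝ)+2) - 1/(2*(n:ℝ)+4))
      = 1/((2*(n:ℝ)+3)*(2*(n:ℝ)+5)) + 1/(Real.exp 1 * ((2*(n:ℝ)+2)*(2*(n:ℝ)+4))) := by
    have h3 : (2*(n:ℝ)+3) ≠ 0 := by positivity
    have h5 : (2*(n:ℝ)+5) ≠ 0 := by positivity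
    have h2' : (2*(n:ℝ)+2) ≠ 0 := by positivity
    have h4 : (2*(n:ℝ)+4) ≠ 0 := by positivity
    have he : Real.exp 1 ≠ 0 := (Real.exp_pos 1).ne'
    field_simp
    ring
  rw [heq]
  exact h

noncomputable def c (n : ℕ) : ℝ :=
  if n < 6 then
    (2*(n:ℝ)+4)^2 / ((2*(n:ℝ)+5)^2 * ((2*(n:ℝ)+2)*(2*(n:ℝ)+5)))
  else
    (1/2) * (1/(2*(n:ℝ)+3) - 1/(2*(n:ℝ)+5))
      + (1/(2*Real.exp 1)) * (1/(2*(n:ℝ)+2) - 1/(2*(n:ℝ)+4))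

lemma c_nonneg (n : ℕ) : 0 ≤ c n := by
  unfold c
  split
  · positivity
  · have e1 : 1/(2*(n:ℝ)+5) ≤ 1/(2*(n:ℝ)+3) := by
      apply one_div_le_one_div_of_le <;> [positivity; linarith]
    have e2 : 1/(2*(n:ℝ)+4) ≤ 1/(2*(n:ℝ)+2) := by
      apply one_div_le_one_div_of_le <;> [positivity; linarith]
    have he : (0:ℝ) < Real.exp 1 := Real.exp_pos 1
    apply add_nonneg
    · apply mul_nonneg (by norm_num); linarith
    · apply mul_nonneg (by positivity); linarith

lemma sum6 : ∑ n ∈ Finset.range 6, c n ≤ 0.12566 := by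
  norm_num [c, Finset.sum_range_succ]

noncomputable def g (j : ℕ) : ℝ :=
  (1/2) * (1/(2*(j:ℝ)+15)) + (1/(2*Real.exp 1)) * (1/(2*(j:ℝ)+14))

lemma sum_c_le (m : ℕ) :
    ∑ n ∈ Finset.range m, c n ≤ 0.12566 + 1/30 + 1/(28*Real.exp 1) := by
  have he : (0:ℝ) < Real.exp 1 := Real.exp_pos 1
  have h1 : ∑ n ∈ Finset.range m, c n ≤ ∑ n ∈ Finset.range (6+m), c n := by
    apply Finset.sum_le_sum_of_subset_of_nonneg
    · exact Finset.range_subset_range.mpr (by omega)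
    · intro i _ _; exact c_nonneg i
  have h2 : ∑ n ∈ Finset.range (6+m), c n
      = ∑ n ∈ Finset.range 6, c n + ∑ j ∈ Finset.range m, c (6+j) :=
    Finset.sum_range_add c 6 m
  have h3 : ∀ j : ℕ, c (6+j) = g j - g (j+1) := by
    intro j
    have hj : ¬ (6+j < 6) := by omega
    simp only [c, if_neg hj, g]
    push_cast
    ring
  have h4 : ∑ j ∈ Finset.range m, c (6+j) = g 0 - g m := by
    rw [Finset.sum_congr rfl (fun j _ => h3 j)]
    exact Finset.sum_range_sub' g m
  have hg0 : g 0 = 1/30 + 1/(28*Real.exp 1) := by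
    simp only [g]
    norm_num
    ring
  have hgm : 0 ≤ g m := by
    unfold g
    positivity
  calc ∑ n ∈ Finset.range m, c n ≤ ∑ n ∈ Finset.range (6+m), c n := h1
    _ = ∑ n ∈ Finset.range 6, c n + (g 0 - g m) := by rw [h2, h4]
    _ ≤ 0.12566 + (1/30 + 1/(28*Real.exp 1)) := by
        have h5 := sum6
        rw [hg0]
        linarith
    _ = 0.12566 + 1/30 + 1/(28*Real.exp 1) := by ring

lemma log3 : (13/12 : ℝ) ≤ Real.log 3 := by
  rw [Real.le_log_iff_exp_le (by norm_num : (0:ℝ) < 3)]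
  have h1 : Real.exp (13/12 : ℝ) ^ (12:ℕ) = Real.exp 13 := by
    rw [← Real.exp_nat_mul]; norm_num
  have h2 : Real.exp (13:ℝ) = Real.exp 1 ^ (13:ℕ) := by
    rw [← Real.exp_nat_mul]; norm_num
  have h3 : Real.exp 1 ^ (13:ℕ) ≤ (2.7182818286:ℝ)^(13:ℕ) :=
    pow_le_pow_left₀ (Real.exp_pos 1).le Real.exp_one_lt_d9.le 13
  have h4 : Real.exp (13/12:ℝ)^(12:ℕ) ≤ (3:ℝ)^(12:ℕ) := by
    rw [h1, h2]
    calc Real.exp 1 ^ (13:ℕ) ≤ (2.7182818286:ℝ)^(13:ℕ) := h3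
      _ ≤ (3:ℝ)^(12:ℕ) := by norm_num
  exact le_of_pow_le_pow_left₀ (by norm_num) (by norm_num) h4

lemma Bbound : (0.12566:ℝ) + 1/30 + 1/(28*Real.exp 1) ≤ (1/6) * Real.log 3 := by
  have h1 : (1:ℝ)/(28*Real.exp 1) ≤ 1/76 := by
    apply one_div_le_one_div_of_le (by norm_num)
    nlinarith [Real.exp_one_gt_d9]
  have h2 := log3
  norm_num at h1 ⊢
  linarith

end BCMaux

/-- Let `t = √(3e)`.  For all `x > 1` and `y ∈ (0,1)` with `xy = artanh y`,
`2 e^{-x} y^{1-x} / √(1-y²) ≤ (2/e) exp(-(1/3) y² log(y/t))`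
(the bound on `e^{φ(x)}` of Bender, Canfield and McKay). -/
theorem BCM_phi_bound :
    ∀ x : ℝ, 1 < x → ∀ y : ℝ, 0 < y → y < 1 → x * y = artanh y →
      2 * Real.exp (-x) * y ^ (1 - x) / Real.sqrt (1 - y ^ 2) ≤
        (2 / Real.exp 1) *
          Real.exp (-(1 / 3) * y ^ 2 * Real.log (y / Real.sqrt (3 * Real.exp 1))) := by
  intro x hx y hy0 hy1 hxy
  have hyne : y ≠ 0 := hy0.ne'
  have h1y : (0:ℝ) < 1 - y := by linarith
  have h1y' : (0:ℝ) < 1 + y := by linarith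
  have h1y2 : (0:ℝ) < 1 - y^2 := by nlinarith
  obtain ⟨u, hu_eq, hu⟩ : ∃ u : ℝ, Real.log y = -u ∧ 0 < u :=
    ⟨-Real.log y, by ring, by linarith [Real.log_neg hy0 hy1]⟩
  have hyexp : y = Real.exp (-u) := by
    rw [← hu_eq, Real.exp_log hy0]
  have habs : |y| < 1 := by rw [abs_of_pos hy0]; exact hy1
  have habs2 : |y^2| < 1 := by rw [abs_of_pos (by positivity)]; nlinarith
  -- power series for artanh y / y = x
  have hA1 : HasSum (fun k : ℕ => y^(2*k) * (1/(2*(k:ℝ)+1))) x := by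
    have h := ((Real.hasSum_log_sub_log_of_abs_lt_one habs).mul_left (1/2)).div_const y
    have hart : artanh y = 1/2 * (Real.log (1+y) - Real.log (1-y)) := by
      rw [artanh, Real.log_div h1y'.ne' h1y.ne']
    have hsum : 1/2 * (Real.log (1+y) - Real.log (1-y)) / y = x := by
      rw [← hart, ← hxy, mul_div_assoc, div_self hyne, mul_one]
    rw [hsum] at h
    have hfun : (fun k : ℕ => 1/2 * ((2:ℝ) * (1/(2*(k:ℝ)+1)) * y^(2*k+1)) / y)
        = fun k : ℕ => y^(2*k) * (1/(2*(k:ℝ)+1)) := by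
      funext k
      rw [pow_succ]
      field_simp
    rwa [hfun] at h
  -- strip the first two terms
  have hS2 : HasSum (fun n : ℕ => y^(2*n+4) * (1/(2*(n:ℝ)+5))) (x - 1 - y^2/3) := by
    have h := (hasSum_nat_add_iff'
      (f := fun k : ℕ => y^(2*k) * (1/(2*(k:ℝ)+1))) 2).mpr hA1
    have hsum2 : x - ∑ i ∈ Finset.range 2, y^(2*i) * (1/(2*(i:ℝ)+1)) = x - 1 - y^2/3 := by
      norm_num [Finset.sum_range_succ]
      ring
    rw [hsum2] at h
    have hfun : (fun n : ℕ => y^(2*(n+2)) * (1/(2*((n+2:ℕ):ℝ)+1)))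
        = fun n : ℕ => y^(2*n+4) * (1/(2*(n:ℝ)+5)) := by
      funext n
      push_cast
      ring
    rwa [hfun] at h
  -- power series for -(1/2) log(1-y^2)
  have hL1 : HasSum (fun n : ℕ => y^(2*n+2) * (1/(2*(n:ℝ)+2))) ((1/2) * (-Real.log (1-y^2))) := by
    have h := (Real.hasSum_pow_div_log_of_abs_lt_one habs2).mul_left (1/2)
    have hfun : (fun n : ℕ => 1/2 * ((y^2)^(n+1) / ((n:ℝ)+1)))
        = fun n : ℕ => y^(2*n+2) * (1/(2*(n:ℝ)+2)) := by
      funext n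
      rw [← pow_mul]
      have hne : ((n:ℝ)+1) ≠ 0 := by positivity
      field_simp
      ring
    rwa [hfun] at h
  have hL2 : HasSum (fun n : ℕ => y^(2*n+4) * (1/(2*(n:ℝ)+4)))
      ((1/2) * (-Real.log (1-y^2)) - y^2/2) := by
    have h := (hasSum_nat_add_iff'
      (f := fun n : ℕ => y^(2*n+2) * (1/(2*(n:ℝ)+2))) 1).mpr hL1
    have hsum1 : (1/2) * (-Real.log (1-y^2)) - ∑ i ∈ Finset.range 1, y^(2*i+2) * (1/(2*(i:ℝ)+2))
        = (1/2) * (-Real.log (1-y^2)) - y^2/2 := by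
      norm_num [Finset.sum_range_succ]
      ring
    rw [hsum1] at h
    have hfun : (fun n : ℕ => y^(2*(n+1)+2) * (1/(2*((n+1:ℕ):ℝ)+2)))
        = fun n : ℕ => y^(2*n+4) * (1/(2*(n:ℝ)+4)) := by
      funext n
      push_cast
      ring
    rwa [hfun] at h
  -- the combined series
  have hF := (hL2.sub hS2).add (hS2.mul_left u)
  -- per-term bound
  have hterm : ∀ n : ℕ,
      (y^(2*n+4) * (1/(2*(n:ℝ)+4)) - y^(2*n+4) * (1/(2*(n:ℝ)+5)))
        + u * (y^(2*n+4) * (1/(2*(n:ℝ)+5))) ≤ y^2 * BCMaux.c n := by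
    intro n
    have hc2 : (0:ℝ) < 2*(n:ℝ)+2 := by positivity
    have hc4 : (0:ℝ) < 2*(n:ℝ)+4 := by positivity
    have hc5 : (0:ℝ) < 2*(n:ℝ)+5 := by positivity
    have hpw : y^(2*n+4) = y^2 * Real.exp (-((2*(n:ℝ)+2) * u)) := by
      have ha : y^(2*n+4) = y^2 * y^(2*n+2) := by ring
      have hb : y^(2*n+2) = Real.exp (-((2*(n:ℝ)+2) * u)) := by
        rw [hyexp, ← Real.exp_nat_mul]
        congr 1
        push_cast
        ring
      rw [ha, hb]
    have hsplit : (y^(2*n+4) * (1/(2*(n:ℝ)+4)) - y^(2*n+4) * (1/(2*(n:ℝ)+5)))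
        + u * (y^(2*n+4) * (1/(2*(n:ℝ)+5)))
        = y^2 * (Real.exp (-((2*(n:ℝ)+2) * u))
            * (1/((2*(n:ℝ)+4)*(2*(n:ℝ)+5)) + u/(2*(n:ℝ)+5))) := by
      rw [hpw]
      field_simp
      ring
    rw [hsplit]
    have hkey : Real.exp (-((2*(n:ℝ)+2) * u))
        * (1/((2*(n:ℝ)+4)*(2*(n:ℝ)+5)) + u/(2*(n:ℝ)+5)) ≤ BCMaux.c n := by
      by_cases h6 : n < 6
      · rw [BCMaux.c, if_pos h6]
        exact BCMaux.head_n n u hu.le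
      · rw [BCMaux.c, if_neg h6]
        exact BCMaux.tail_n n u hu.le
    exact mul_le_mul_of_nonneg_left hkey (by positivity)
  -- nonnegativity of the terms
  have hFnn : ∀ n : ℕ, 0 ≤ (y^(2*n+4) * (1/(2*(n:ℝ)+4)) - y^(2*n+4) * (1/(2*(n:ℝ)+5)))
        + u * (y^(2*n+4) * (1/(2*(n:ℝ)+5))) := by
    intro n
    have hc4 : (0:ℝ) < 2*(n:ℝ)+4 := by positivity
    have hc5 : (0:ℝ) < 2*(n:ℝ)+5 := by positivity
    have hyp : (0:ℝ) ≤ y^(2*n+4) := by positivity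
    have h1 : y^(2*n+4) * (1/(2*(n:ℝ)+5)) ≤ y^(2*n+4) * (1/(2*(n:ℝ)+4)) := by
      apply mul_le_mul_of_nonneg_left _ hyp
      apply one_div_le_one_div_of_le <;> linarith
    have h2 : 0 ≤ u * (y^(2*n+4) * (1/(2*(n:ℝ)+5))) := by positivity
    linarith
  -- the sum bound
  have hbnd : ∀ s : Finset ℕ,
      ∑ n ∈ s, ((y^(2*n+4) * (1/(2*(n:ℝ)+4)) - y^(2*n+4) * (1/(2*(n:ℝ)+5)))
        + u * (y^(2*n+4) * (1/(2*(n:ℝ)+5))))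
      ≤ y^2 * (0.12566 + 1/30 + 1/(28*Real.exp 1)) := by
    intro s
    obtain ⟨M, hM⟩ := s.exists_nat_subset_range
    calc ∑ n ∈ s, ((y^(2*n+4) * (1/(2*(n:ℝ)+4)) - y^(2*n+4) * (1/(2*(n:ℝ)+5)))
          + u * (y^(2*n+4) * (1/(2*(n:ℝ)+5))))
        ≤ ∑ n ∈ Finset.range M, ((y^(2*n+4) * (1/(2*(n:ℝ)+4)) - y^(2*n+4) * (1/(2*(n:ℝ)+5)))
          + u * (y^(2*n+4) * (1/(2*(n:ℝ)+5)))) :=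
          Finset.sum_le_sum_of_subset_of_nonneg hM (fun i _ _ => hFnn i)
      _ ≤ ∑ n ∈ Finset.range M, y^2 * BCMaux.c n :=
          Finset.sum_le_sum (fun i _ => hterm i)
      _ = y^2 * ∑ n ∈ Finset.range M, BCMaux.c n := by rw [Finset.mul_sum]
      _ ≤ y^2 * (0.12566 + 1/30 + 1/(28*Real.exp 1)) :=
          mul_le_mul_of_nonneg_left (BCMaux.sum_c_le M) (by positivity)
  have hS : ((1/2) * (-Real.log (1-y^2)) - y^2/2 - (x - 1 - y^2/3)) + u * (x - 1 - y^2/3)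
      ≤ y^2 * (0.12566 + 1/30 + 1/(28*Real.exp 1)) := by
    rw [← hF.tsum_eq]
    exact Summable.tsum_le_of_sum_le hF.summable hbnd
  have hS6 : ((1/2) * (-Real.log (1-y^2)) - y^2/2 - (x - 1 - y^2/3)) + u * (x - 1 - y^2/3)
      ≤ y^2 * ((1/6) * Real.log 3) := by
    calc ((1/2) * (-Real.log (1-y^2)) - y^2/2 - (x - 1 - y^2/3)) + u * (x - 1 - y^2/3)
        ≤ y^2 * (0.12566 + 1/30 + 1/(28*Real.exp 1)) := hS
      _ ≤ y^2 * ((1/6) * Real.log 3) :=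
          mul_le_mul_of_nonneg_left BCMaux.Bbound (by positivity)
  -- reduce the goal to the exponent inequality
  have hlogdiv : Real.log (y / Real.sqrt (3*Real.exp 1))
      = Real.log y - (1/2)*(Real.log 3 + 1) := by
    rw [Real.log_div hyne (Real.sqrt_ne_zero'.mpr (by positivity)),
      Real.log_sqrt (by positivity), Real.log_mul (by norm_num) (Real.exp_ne_zero 1),
      Real.log_exp]
    ring
  rw [hlogdiv]
  have hLrw : 2 * Real.exp (-x) * y ^ (1-x) / Real.sqrt (1-y^2)
      = 2 * Real.exp ((-x + Real.log y * (1-x)) - Real.log (1-y^2) * (1/2)) := by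
    rw [Real.rpow_def_of_pos hy0, Real.sqrt_eq_rpow, Real.rpow_def_of_pos h1y2,
      mul_assoc, ← Real.exp_add, mul_div_assoc, ← Real.exp_sub]
  have hRrw : (2 / Real.exp 1) * Real.exp (-(1/3) * y^2 * (Real.log y - (1/2)*(Real.log 3 + 1)))
      = 2 * Real.exp ((-(1/3) * y^2 * (Real.log y - (1/2)*(Real.log 3 + 1))) - 1) := by
    rw [div_mul_eq_mul_div, mul_div_assoc, ← Real.exp_sub]
  rw [hLrw]
  rw [show -(1 / 3) * y ^ 2 * (Real.log y - 1 / 2 * (Real.log 3 + 1))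
    = -(1/3) * y^2 * (Real.log y - (1/2)*(Real.log 3 + 1)) from by ring, hRrw]
  apply mul_le_mul_of_nonneg_left _ (by norm_num : (0:ℝ) ≤ 2)
  rw [Real.exp_le_exp]
  rw [hu_eq]
  nlinarith [hS6]
end

section
/- There is a constant C > 0 such that for all integers n ≥ 3 and all reals z with 0 ≤ z ≤ 3/(e n), one has B(n, z) ≤ C · z², where B(n, z) = n^{-(n-2)} ∑_{k=⌊n/2⌋}^{binom(n,2)-n} C(n, n+k) z^{k+1}. -/
/-- `connCount n m` is the number of simple graphs on the labelled vertex set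
`{0, …, n-1}` that are connected and have exactly `m` edges. -/
noncomputable def connCount (n m : ℕ) : ℕ :=
  Nat.card {G : SimpleGraph (Fin n) // G.Connected ∧ G.edgeSet.ncard = m}

/-- The dense part of the surplus generating function, normalised by the number
`n^{n-2}` of trees: `B(n,z) = n^{-(n-2)} ∑_{k=⌊n/2⌋}^{binom(n,2)-n} C(n, n+k) z^{k+1}`. -/
noncomputable def denseB (n : ℕ) (z : ℝ) : ℝ :=
  ((n : ℝ) ^ (n - 2))⁻¹ *
    ∑ k ∈ Finset.Icc (n / 2) (n * (n - 1) / 2 - n),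
      (connCount n (n + k) : ℝ) * z ^ (k + 1)

open Finset in
lemma connCount_le_choose (n m : ℕ) : connCount n m ≤ (n.choose 2).choose m := by
  classical
  have key : Nat.card {s : Finset {e : Sym2 (Fin n) // ¬e.IsDiag} // s.card = m}
      = (n.choose 2).choose m := by
    rw [Nat.card_eq_fintype_card, Fintype.card_finset_len, Sym2.card_subtype_not_diag,
      Fintype.card_fin]
  rw [connCount, ← key]
  have hmap : ∀ G : SimpleGraph (Fin n),
      (G.edgeFinset.subtype (fun e => ¬e.IsDiag)).map (Function.Embedding.subtype _)
        = G.edgeFinset := by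
    intro G
    rw [Finset.subtype_map]
    exact Finset.filter_true_of_mem fun e he =>
      G.not_isDiag_of_mem_edgeSet (SimpleGraph.mem_edgeFinset.mp he)
  refine Nat.card_le_card_of_injective
    (fun G => ⟨G.1.edgeFinset.subtype (fun e => ¬e.IsDiag), ?_⟩) ?_
  · have h1 : (G.1.edgeFinset.subtype (fun e => ¬e.IsDiag)).card = G.1.edgeFinset.card := by
      conv_rhs => rw [← hmap G.1]
      rw [Finset.card_map]
    rw [h1]
    have h2 : G.1.edgeFinset.card = G.1.edgeSet.ncard := by
      simp [SimpleGraph.edgeFinset, Set.ncard_eq_toFinset_card']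
    rw [h2]
    exact G.2.2
  · intro G₁ G₂ h
    apply Subtype.ext
    apply SimpleGraph.edgeFinset_inj.mp
    rw [← hmap G₁.1, ← hmap G₂.1]
    exact congrArg (Finset.map _) (congrArg Subtype.val h)

lemma pow_self_le_exp_mul_factorial (j : ℕ) : (j : ℝ) ^ j ≤ Real.exp j * j.factorial := by
  have h := Real.sum_le_exp_of_nonneg (x := (j : ℝ)) (Nat.cast_nonneg j) (j + 1)
  have h2 : (j : ℝ) ^ j / j.factorial ≤ Real.exp j :=
    le_trans (Finset.single_le_sum (f := fun i => (j : ℝ) ^ i / i.factorial)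
      (fun i _ => by positivity) (Finset.self_mem_range_succ j)) h
  rwa [div_le_iff₀ (by positivity)] at h2

set_option maxHeartbeats 1000000 in
/-- There is `C > 0` such that for all `n ≥ 3` and `0 ≤ z ≤ 3/(en)`,
one has `B(n,z) ≤ C z²`. -/
theorem dense_bound :
    ∃ C : ℝ, 0 < C ∧ ∀ n : ℕ, 3 ≤ n → ∀ z : ℝ, 0 ≤ z →
      z ≤ 3 / (Real.exp 1 * n) → denseB n z ≤ C * z ^ 2 := by
  have he3 : Real.exp 1 < 3 := lt_trans Real.exp_one_lt_d9 (by norm_num)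
  set a : ℝ := Real.log 3 - 1 with ha_def
  have ha : 0 < a := by
    have : 1 < Real.log 3 := (Real.lt_log_iff_exp_lt (by norm_num)).mpr he3
    simp only [ha_def]; linarith
  refine ⟨720 / a ^ 6, by positivity, ?_⟩
  intro n hn z hz hzle
  have hnR : (3 : ℝ) ≤ (n : ℝ) := by exact_mod_cast hn
  have hnpos : (0 : ℝ) < n := by linarith
  have hepos : (0 : ℝ) < Real.exp 1 := Real.exp_pos 1
  have hb : (0 : ℝ) < Real.exp 1 * n / 3 := by positivity
  set B : ℝ := Real.exp 1 * n / 3 with hB_def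
  -- per-term bound
  have hterm : ∀ k ∈ Finset.Icc (n / 2) (n * (n - 1) / 2 - n),
      (connCount n (n + k) : ℝ) * z ^ (k + 1) ≤ B ^ (n + 1) * z ^ 2 := by
    intro k hk
    obtain ⟨hk1, _⟩ := Finset.mem_Icc.mp hk
    have hk1' : 1 ≤ k := le_trans (by omega) hk1
    have h2k : (n : ℝ) - 1 ≤ 2 * (k : ℝ) := by
      have h' : n ≤ 2 * (n / 2) + 1 := by omega
      have h'' : (n : ℝ) ≤ 2 * ((n / 2 : ℕ) : ℝ) + 1 := by exact_mod_cast h'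
      have hkk : ((n / 2 : ℕ) : ℝ) ≤ (k : ℝ) := by exact_mod_cast hk1
      linarith
    set j := n + k with hj_def
    have hjposN : 0 < j := by omega
    have hjpos : (0 : ℝ) < (j : ℝ) := by exact_mod_cast hjposN
    have hjval : (j : ℝ) = (n : ℝ) + (k : ℝ) := by exact_mod_cast rfl
    set M : ℕ := n.choose 2 with hM_def
    have hMval : (M : ℝ) = (n : ℝ) * ((n : ℝ) - 1) / 2 := Nat.cast_choose_two (K := ℝ) n
    have h3M : 3 * (M : ℝ) ≤ (n : ℝ) * (j : ℝ) := by
      rw [hMval, hjval]; nlinarith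
    have hratio : Real.exp 1 * (M : ℝ) / (j : ℝ) ≤ B := by
      rw [hB_def, div_le_div_iff₀ hjpos (by norm_num)]
      nlinarith
    have hfact : ((j : ℝ) / Real.exp 1) ^ j ≤ (j.factorial : ℝ) := by
      rw [div_pow, div_le_iff₀ (by positivity)]
      have h := pow_self_le_exp_mul_factorial j
      rw [show Real.exp (j : ℝ) = Real.exp 1 ^ j by
        rw [← Real.exp_nat_mul]; norm_num] at h
      linarith
    have hchoose : ((M.choose j : ℕ) : ℝ) ≤ B ^ j := by
      calc ((M.choose j : ℕ) : ℝ) ≤ (M : ℝ) ^ j / (j.factorial : ℝ) :=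
            Nat.choose_le_pow_div j M
        _ ≤ (Real.exp 1 * (M : ℝ) / (j : ℝ)) ^ j := by
            rw [div_le_iff₀ (by positivity)]
            calc (M : ℝ) ^ j = (Real.exp 1 * (M : ℝ) / (j : ℝ) * ((j : ℝ) / Real.exp 1)) ^ j := by
                  congr 1; field_simp
              _ = (Real.exp 1 * (M : ℝ) / (j : ℝ)) ^ j * ((j : ℝ) / Real.exp 1) ^ j := mul_pow _ _ _
              _ ≤ (Real.exp 1 * (M : ℝ) / (j : ℝ)) ^ j * (j.factorial : ℝ) := by
                  exact mul_le_mul_of_nonneg_left hfact (by positivity)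
        _ ≤ B ^ j := pow_le_pow_left₀ (by positivity) hratio j
    have hzpow : z ^ (k + 1) ≤ z ^ 2 * (3 / (Real.exp 1 * n)) ^ (k - 1) := by
      rw [show k + 1 = 2 + (k - 1) by omega, pow_add]
      exact mul_le_mul_of_nonneg_left (pow_le_pow_left₀ hz hzle _) (by positivity)
    have hconn : (connCount n j : ℝ) ≤ ((M.choose j : ℕ) : ℝ) := by
      exact_mod_cast connCount_le_choose n j
    calc (connCount n (n + k) : ℝ) * z ^ (k + 1)
        ≤ B ^ j * (z ^ 2 * (3 / (Real.exp 1 * n)) ^ (k - 1)) := by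
          apply mul_le_mul (le_trans hconn hchoose) hzpow (by positivity) (by positivity)
      _ = B ^ (n + 1) * z ^ 2 * (B * (3 / (Real.exp 1 * n))) ^ (k - 1) := by
          rw [show j = (n + 1) + (k - 1) by omega, pow_add, mul_pow]; ring
      _ = B ^ (n + 1) * z ^ 2 := by
          rw [show B * (3 / (Real.exp 1 * n)) = 1 by rw [hB_def]; field_simp, one_pow, mul_one]
  -- sum bound
  have hcard : (((Finset.Icc (n / 2) (n * (n - 1) / 2 - n)).card : ℕ) : ℝ) ≤ (n : ℝ) ^ 2 := by
    have h1 : n * (n - 1) / 2 ≤ n * n := le_trans (Nat.div_le_self _ _)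
      (Nat.mul_le_mul_left n (by omega))
    have h2 : (Finset.Icc (n / 2) (n * (n - 1) / 2 - n)).card ≤ n * n := by
      rw [Nat.card_Icc]; omega
    calc (((Finset.Icc (n / 2) (n * (n - 1) / 2 - n)).card : ℕ) : ℝ) ≤ ((n * n : ℕ) : ℝ) := by
          exact_mod_cast h2
      _ = (n : ℝ) ^ 2 := by push_cast; ring
  have hsum : ∑ k ∈ Finset.Icc (n / 2) (n * (n - 1) / 2 - n),
      (connCount n (n + k) : ℝ) * z ^ (k + 1) ≤ (n : ℝ) ^ 2 * (B ^ (n + 1) * z ^ 2) := by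
    calc ∑ k ∈ Finset.Icc (n / 2) (n * (n - 1) / 2 - n),
        (connCount n (n + k) : ℝ) * z ^ (k + 1)
        ≤ (Finset.Icc (n / 2) (n * (n - 1) / 2 - n)).card • (B ^ (n + 1) * z ^ 2) :=
          Finset.sum_le_card_nsmul _ _ _ hterm
      _ = ((Finset.Icc (n / 2) (n * (n - 1) / 2 - n)).card : ℝ) * (B ^ (n + 1) * z ^ 2) := by
          rw [nsmul_eq_mul]
      _ ≤ (n : ℝ) ^ 2 * (B ^ (n + 1) * z ^ 2) := by
          exact mul_le_mul_of_nonneg_right hcard (by positivity)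
  -- final constant bound
  have hfin : ((n : ℝ) ^ (n - 2))⁻¹ * ((n : ℝ) ^ 2 * B ^ (n + 1)) ≤ 720 / a ^ 6 := by
    have hBsplit : B ^ (n + 1) = (Real.exp 1 / 3) ^ (n + 1) * (n : ℝ) ^ (n + 1) := by
      rw [hB_def, show Real.exp 1 * (n : ℝ) / 3 = (Real.exp 1 / 3) * (n : ℝ) by ring, mul_pow]
    have hnsplit : (n : ℝ) ^ (n + 1) = (n : ℝ) ^ (n - 2) * (n : ℝ) ^ 3 := by
      rw [← pow_add]; congr 1; omega
    have hnne : ((n : ℝ) ^ (n - 2)) ≠ 0 := by positivity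
    have hLHS : ((n : ℝ) ^ (n - 2))⁻¹ * ((n : ℝ) ^ 2 * B ^ (n + 1))
        = (n : ℝ) ^ 5 * (Real.exp 1 / 3) ^ (n + 1) := by
      rw [hBsplit, hnsplit]
      field_simp
    rw [hLHS]
    -- exponential lower bound : (3/e)^(n+1) ≥ ((n+1)a)^6/720
    have hea : Real.exp a = 3 / Real.exp 1 := by
      rw [ha_def, Real.exp_sub, Real.exp_log (by norm_num : (0:ℝ) < 3)]
    have hx : (0 : ℝ) ≤ ((n : ℝ) + 1) * a := by positivity
    have hexp : (((n : ℝ) + 1) * a) ^ 6 / 720 ≤ (3 / Real.exp 1) ^ (n + 1) := by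
      have h := Real.sum_le_exp_of_nonneg hx 7
      have h6 : (((n : ℝ) + 1) * a) ^ 6 / (Nat.factorial 6 : ℝ)
          ≤ Real.exp (((n : ℝ) + 1) * a) :=
        le_trans (Finset.single_le_sum
          (f := fun i => (((n : ℝ) + 1) * a) ^ i / (Nat.factorial i : ℝ))
          (fun i _ => by positivity) (by norm_num : 6 ∈ Finset.range 7)) h
      have heq : Real.exp (((n : ℝ) + 1) * a) = (3 / Real.exp 1) ^ (n + 1) := by
        rw [show ((n : ℝ) + 1) = ((n + 1 : ℕ) : ℝ) by push_cast; ring,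
          Real.exp_nat_mul, hea]
      rw [heq] at h6
      simpa [Nat.factorial] using h6
    have hP : (0 : ℝ) < (3 / Real.exp 1) ^ (n + 1) := by positivity
    have hinv : (Real.exp 1 / 3) ^ (n + 1) = ((3 / Real.exp 1) ^ (n + 1))⁻¹ := by
      rw [← inv_pow]; congr 1; rw [inv_div]
    rw [hinv]
    rw [mul_inv_le_iff₀ hP, mul_comm (720 / a ^ 6)]
    have h1 : (n : ℝ) ^ 5 ≤ ((n : ℝ) + 1) ^ 6 := by
      calc (n : ℝ) ^ 5 ≤ ((n : ℝ) + 1) ^ 5 :=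
            pow_le_pow_left₀ (by linarith) (by linarith) 5
        _ ≤ ((n : ℝ) + 1) ^ 6 := pow_le_pow_right₀ (by linarith) (by norm_num)
    have h2 : ((n : ℝ) + 1) ^ 6 * a ^ 6 ≤ 720 * (3 / Real.exp 1) ^ (n + 1) := by
      have := hexp
      rw [mul_pow] at this
      linarith
    have h3 : (n : ℝ) ^ 5 * a ^ 6 ≤ 720 * (3 / Real.exp 1) ^ (n + 1) := by
      exact le_trans (mul_le_mul_of_nonneg_right h1 (pow_nonneg ha.le 6)) h2
    have ha6 : (0 : ℝ) < a ^ 6 := pow_pos ha 6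
    calc (n : ℝ) ^ 5 = (n : ℝ) ^ 5 * a ^ 6 / a ^ 6 := by field_simp
      _ ≤ 720 * (3 / Real.exp 1) ^ (n + 1) / a ^ 6 := by gcongr
      _ = (3 / Real.exp 1) ^ (n + 1) * (720 / a ^ 6) := by ring
  -- assemble
  have hinvpos : (0 : ℝ) ≤ ((n : ℝ) ^ (n - 2))⁻¹ := by positivity
  calc denseB n z ≤ ((n : ℝ) ^ (n - 2))⁻¹ * ((n : ℝ) ^ 2 * (B ^ (n + 1) * z ^ 2)) := by
        rw [denseB]
        exact mul_le_mul_of_nonneg_left hsum hinvpos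
    _ = ((n : ℝ) ^ (n - 2))⁻¹ * ((n : ℝ) ^ 2 * B ^ (n + 1)) * z ^ 2 := by ring
    _ ≤ 720 / a ^ 6 * z ^ 2 := mul_le_mul_of_nonneg_right hfin (by positivity)
end

section
/- There is a constant C > 0 such that for every real a > 0, every s ∈ ℝ, and every positive integer V, ∑_{n=1}^{⌊a√V⌋} (∏_{j=1}^{n-1} (1 - j/V)) · (1/(n-1)!) · (n^{n-1}/e^{n-1}) · (1 + s/√V)^{n-1} ≤ C · e^{a|s|} · (1 + a^{1/2} V^{1/4}). -/
open Real Finset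

private lemma stirling_lb (m : ℕ) (hm : 1 ≤ m) :
    Real.sqrt (2 * m) * ((m : ℝ) / Real.exp 1) ^ m ≤ (Nat.factorial m : ℝ) := by
  have hpi : Real.sqrt Real.pi ≤ Stirling.stirlingSeq m := by
    obtain ⟨k, rfl⟩ : ∃ k, m = k + 1 := ⟨m - 1, by omega⟩
    have ht : Filter.Tendsto (Stirling.stirlingSeq ∘ Nat.succ) Filter.atTop
        (nhds (Real.sqrt Real.pi)) :=
      Stirling.tendsto_stirlingSeq_sqrt_pi.comp (Filter.tendsto_add_atTop_nat 1)
    exact Stirling.stirlingSeq'_antitone.le_of_tendsto ht k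
  have h1 : (1 : ℝ) ≤ Stirling.stirlingSeq m := by
    refine le_trans ?_ hpi
    rw [show (1:ℝ) = Real.sqrt 1 by simp]
    exact Real.sqrt_le_sqrt (by linarith [Real.pi_gt_three])
  have hD : (0 : ℝ) < Real.sqrt (2 * m) * ((m : ℝ) / Real.exp 1) ^ m := by
    have hm' : (0 : ℝ) < m := by exact_mod_cast hm
    positivity
  have := (one_le_div hD).mp (by simpa [Stirling.stirlingSeq] using h1)
  linarith

private lemma termC (n : ℕ) (hn : 1 ≤ n) :
    (1 / (Nat.factorial (n - 1) : ℝ)) * ((n : ℝ) ^ (n - 1) / Real.exp 1 ^ (n - 1))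
      ≤ Real.exp 1 / Real.sqrt n := by
  obtain ⟨m, rfl⟩ : ∃ m, n = m + 1 := ⟨n - 1, by omega⟩
  simp only [Nat.add_sub_cancel]
  rcases Nat.eq_zero_or_pos m with rfl | hm
  · simp [Real.exp_one_gt_d9.le]
  · have hm0 : (0 : ℝ) < m := by exact_mod_cast hm
    have hfac : (0 : ℝ) < (Nat.factorial m : ℝ) := by exact_mod_cast m.factorial_pos
    have hsq : (0 : ℝ) < Real.sqrt (m + 1) := Real.sqrt_pos.mpr (by positivity)
    have hep : (0 : ℝ) < Real.exp 1 ^ m := by positivity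
    -- key Stirling bound
    have key := stirling_lb m hm
    have hkey : Real.sqrt (2 * m) * (m : ℝ) ^ m ≤ (Nat.factorial m : ℝ) * Real.exp 1 ^ m := by
      have h' : Real.sqrt (2 * m) * ((m : ℝ) ^ m / Real.exp 1 ^ m)
          ≤ (Nat.factorial m : ℝ) := by rwa [← div_pow]
      calc Real.sqrt (2 * m) * (m : ℝ) ^ m
          = (Real.sqrt (2 * m) * ((m : ℝ) ^ m / Real.exp 1 ^ m)) * Real.exp 1 ^ m := by
            field_simp
        _ ≤ (Nat.factorial m : ℝ) * Real.exp 1 ^ m :=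
            mul_le_mul_of_nonneg_right h' hep.le
    -- (m+1)^m ≤ e * m^m
    have hpow : ((m : ℝ) + 1) ^ m ≤ Real.exp 1 * (m : ℝ) ^ m := by
      have h1 : ((m : ℝ) + 1) = (m : ℝ) * (1 + 1 / m) := by field_simp
      have h2 : (1 + 1 / (m : ℝ)) ^ m ≤ Real.exp (1 / m) ^ m := by
        apply pow_le_pow_left₀ (by positivity)
        linarith [Real.add_one_le_exp (1 / (m : ℝ))]
      have h3 : Real.exp (1 / (m : ℝ)) ^ m = Real.exp 1 := by
        rw [← Real.exp_nat_mul]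
        congr 1
        field_simp
      calc ((m : ℝ) + 1) ^ m = (m : ℝ) ^ m * (1 + 1 / m) ^ m := by
            rw [h1, mul_pow]
        _ ≤ (m : ℝ) ^ m * Real.exp 1 := by
            rw [h3] at h2
            exact mul_le_mul_of_nonneg_left h2 (by positivity)
        _ = Real.exp 1 * (m : ℝ) ^ m := by ring
    -- √(m+1) ≤ √(2m)
    have hsqle : Real.sqrt ((m : ℝ) + 1) ≤ Real.sqrt (2 * m) := by
      apply Real.sqrt_le_sqrt
      have : (1 : ℝ) ≤ m := by exact_mod_cast hm
      linarith
    have lhs_eq : 1 / (Nat.factorial m : ℝ) * ((↑(m + 1) : ℝ) ^ m / Real.exp 1 ^ m)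
        = ((m : ℝ) + 1) ^ m / ((Nat.factorial m : ℝ) * Real.exp 1 ^ m) := by
      push_cast; field_simp
    have hsqn : ((m : ℕ) + 1 : ℕ) = m + 1 := rfl
    have : Real.sqrt (↑(m + 1) : ℝ) = Real.sqrt ((m : ℝ) + 1) := by push_cast; rfl
    rw [lhs_eq, this, div_le_div_iff₀ (by positivity) hsq]
    calc ((m : ℝ) + 1) ^ m * Real.sqrt ((m : ℝ) + 1)
        ≤ (Real.exp 1 * (m : ℝ) ^ m) * Real.sqrt (2 * m) := by
          apply mul_le_mul hpow hsqle (Real.sqrt_nonneg _) (by positivity)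
      _ = Real.exp 1 * (Real.sqrt (2 * m) * (m : ℝ) ^ m) := by ring
      _ ≤ Real.exp 1 * ((Nat.factorial m : ℝ) * Real.exp 1 ^ m) :=
          mul_le_mul_of_nonneg_left hkey (Real.exp_pos 1).le

private lemma sum_inv_sqrt (N : ℕ) :
    ∑ n ∈ Finset.Icc 1 N, 1 / Real.sqrt n ≤ 2 * Real.sqrt N := by
  induction N with
  | zero => simp
  | succ N ih =>
    rw [Finset.sum_Icc_succ_top (by omega)]
    have hx : Real.sqrt N ^ 2 = N := Real.sq_sqrt (by positivity)
    have hy : Real.sqrt ((N : ℝ) + 1) ^ 2 = (N : ℝ) + 1 := Real.sq_sqrt (by positivity)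
    have hy0 : (0 : ℝ) < Real.sqrt ((N : ℝ) + 1) := Real.sqrt_pos.mpr (by positivity)
    have hc : (Real.sqrt (↑(N + 1)) : ℝ) = Real.sqrt ((N : ℝ) + 1) := by push_cast; rfl
    rw [hc]
    have hstep : 1 / Real.sqrt ((N : ℝ) + 1)
        ≤ 2 * Real.sqrt ((N : ℝ) + 1) - 2 * Real.sqrt N := by
      rw [div_le_iff₀ hy0]
      nlinarith [sq_nonneg (Real.sqrt N - Real.sqrt ((N : ℝ) + 1)), Real.sqrt_nonneg (N : ℝ)]
    linarith

/-- There is `C > 0` such that for all `a > 0`, all `s ∈ ℝ`, and all `V ≥ 1`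
with `1 + s/√V ≥ 0`,
`∑_{n=1}^{⌊a√V⌋} (∏_{j=1}^{n-1}(1-j/V)) (1/(n-1)!) (n^{n-1}/e^{n-1}) (1+s/√V)^{n-1}
  ≤ C e^{a|s|} (1 + a^{1/2} V^{1/4})`. -/
theorem initial_sum_bound :
    ∃ C : ℝ, 0 < C ∧ ∀ a : ℝ, 0 < a → ∀ s : ℝ, ∀ V : ℕ, 0 < V →
      0 ≤ 1 + s / Real.sqrt V →
      ∑ n ∈ Finset.Icc 1 ⌊a * Real.sqrt V⌋₊,
        (∏ j ∈ Finset.Icc 1 (n - 1), (1 - (j : ℝ) / V)) *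
          (1 / (Nat.factorial (n - 1) : ℝ)) *
          ((n : ℝ) ^ (n - 1) / Real.exp 1 ^ (n - 1)) *
          (1 + s / Real.sqrt V) ^ (n - 1)
      ≤ C * Real.exp (a * |s|) * (1 + a ^ ((1 : ℝ) / 2) * (V : ℝ) ^ ((1 : ℝ) / 4)) := by
  refine ⟨2 * Real.exp 1, by positivity, fun a ha s V hV hq => ?_⟩
  set N := ⌊a * Real.sqrt V⌋₊ with hN
  set q := 1 + s / Real.sqrt V with hqdef
  have hV0 : (0 : ℝ) < V := by exact_mod_cast hV
  have hsV : (0 : ℝ) < Real.sqrt V := Real.sqrt_pos.mpr hV0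
  have hNle : (N : ℝ) ≤ a * Real.sqrt V := Nat.floor_le (by positivity)
  have hE : (0 : ℝ) < Real.exp (a * |s|) := Real.exp_pos _
  -- per-term bound
  have hterm : ∀ n ∈ Finset.Icc 1 N,
      (∏ j ∈ Finset.Icc 1 (n - 1), (1 - (j : ℝ) / V)) *
          (1 / (Nat.factorial (n - 1) : ℝ)) *
          ((n : ℝ) ^ (n - 1) / Real.exp 1 ^ (n - 1)) * q ^ (n - 1)
      ≤ Real.exp 1 * Real.exp (a * |s|) * (1 / Real.sqrt n) := by
    intro n hn
    obtain ⟨hn1, hnN⟩ := Finset.mem_Icc.mp hn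
    -- the product is in [0,1]
    have hP0 : 0 ≤ ∏ j ∈ Finset.Icc 1 (n - 1), (1 - (j : ℝ) / V) := by
      rcases lt_or_ge (n - 1) V with h | h
      · apply Finset.prod_nonneg
        intro j hj
        obtain ⟨hj1, hj2⟩ := Finset.mem_Icc.mp hj
        have : (j : ℝ) ≤ V := by exact_mod_cast (by omega : j ≤ V)
        have := div_le_one_of_le₀ this hV0.le
        linarith
      · rw [Finset.prod_eq_zero (Finset.mem_Icc.mpr ⟨hV, h⟩ : V ∈ Finset.Icc 1 (n-1))]
        field_simp; norm_num
    have hP1 : ∏ j ∈ Finset.Icc 1 (n - 1), (1 - (j : ℝ) / V) ≤ 1 := by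
      rcases lt_or_ge (n - 1) V with h | h
      · apply Finset.prod_le_one
        · intro j hj
          obtain ⟨hj1, hj2⟩ := Finset.mem_Icc.mp hj
          have : (j : ℝ) ≤ V := by exact_mod_cast (by omega : j ≤ V)
          have := div_le_one_of_le₀ this hV0.le
          linarith
        · intro j hj
          have : (0 : ℝ) ≤ (j : ℝ) / V := by positivity
          linarith
      · rw [Finset.prod_eq_zero (Finset.mem_Icc.mpr ⟨hV, h⟩ : V ∈ Finset.Icc 1 (n-1))]
        · norm_num
        · field_simp; norm_num
    -- q^(n-1) ≤ exp (a |s|)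
    have hpow : q ^ (n - 1) ≤ Real.exp (a * |s|) := by
      have h1 : q ≤ Real.exp (s / Real.sqrt V) := by
        have := Real.add_one_le_exp (s / Real.sqrt V)
        rw [hqdef]; linarith
      have h2 : q ^ (n - 1) ≤ Real.exp (s / Real.sqrt V) ^ (n - 1) :=
        pow_le_pow_left₀ hq h1 _
      have h3 : Real.exp (s / Real.sqrt V) ^ (n - 1)
          = Real.exp ((n - 1 : ℕ) * (s / Real.sqrt V)) := by
        rw [Real.exp_nat_mul]
      have h4 : ((n - 1 : ℕ) : ℝ) * (s / Real.sqrt V) ≤ a * |s| := by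
        have hn' : ((n - 1 : ℕ) : ℝ) ≤ a * Real.sqrt V := by
          have : ((n - 1 : ℕ) : ℝ) ≤ (n : ℝ) := by
            exact_mod_cast (by omega : n - 1 ≤ n)
          have hnn : (n : ℝ) ≤ (N : ℝ) := by exact_mod_cast hnN
          linarith
        have hs1 : s ≤ |s| := le_abs_self s
        have hnn0 : (0 : ℝ) ≤ ((n - 1 : ℕ) : ℝ) := by positivity
        calc ((n - 1 : ℕ) : ℝ) * (s / Real.sqrt V)
            ≤ ((n - 1 : ℕ) : ℝ) * (|s| / Real.sqrt V) := by
              apply mul_le_mul_of_nonneg_left _ hnn0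
              exact div_le_div_of_nonneg_right hs1 hsV.le  -- s/√V ≤ |s|/√V
          _ ≤ (a * Real.sqrt V) * (|s| / Real.sqrt V) := by
              apply mul_le_mul_of_nonneg_right hn'
              positivity
          _ = a * |s| := by field_simp
      calc q ^ (n - 1) ≤ Real.exp (s / Real.sqrt V) ^ (n - 1) := h2
        _ = Real.exp ((n - 1 : ℕ) * (s / Real.sqrt V)) := h3
        _ ≤ Real.exp (a * |s|) := Real.exp_le_exp.mpr h4
    have hC := termC n hn1
    have hq0 : (0 : ℝ) ≤ q ^ (n - 1) := pow_nonneg hq _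
    have hrest : (1 / (Nat.factorial (n - 1) : ℝ)) *
        ((n : ℝ) ^ (n - 1) / Real.exp 1 ^ (n - 1)) * q ^ (n - 1)
        ≤ (Real.exp 1 / Real.sqrt n) * Real.exp (a * |s|) := by
      apply mul_le_mul hC hpow hq0 (by positivity)
    have hrest0 : (0 : ℝ) ≤ (1 / (Nat.factorial (n - 1) : ℝ)) *
        ((n : ℝ) ^ (n - 1) / Real.exp 1 ^ (n - 1)) * q ^ (n - 1) := by positivity
    calc (∏ j ∈ Finset.Icc 1 (n - 1), (1 - (j : ℝ) / V)) *
          (1 / (Nat.factorial (n - 1) : ℝ)) *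
          ((n : ℝ) ^ (n - 1) / Real.exp 1 ^ (n - 1)) * q ^ (n - 1)
        = (∏ j ∈ Finset.Icc 1 (n - 1), (1 - (j : ℝ) / V)) *
          ((1 / (Nat.factorial (n - 1) : ℝ)) *
          ((n : ℝ) ^ (n - 1) / Real.exp 1 ^ (n - 1)) * q ^ (n - 1)) := by ring
      _ ≤ 1 * ((1 / (Nat.factorial (n - 1) : ℝ)) *
          ((n : ℝ) ^ (n - 1) / Real.exp 1 ^ (n - 1)) * q ^ (n - 1)) :=
          mul_le_mul_of_nonneg_right hP1 hrest0
      _ = (1 / (Nat.factorial (n - 1) : ℝ)) *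
          ((n : ℝ) ^ (n - 1) / Real.exp 1 ^ (n - 1)) * q ^ (n - 1) := one_mul _
      _ ≤ (Real.exp 1 / Real.sqrt n) * Real.exp (a * |s|) := hrest
      _ = Real.exp 1 * Real.exp (a * |s|) * (1 / Real.sqrt n) := by ring
  -- sum it
  have hsum : ∑ n ∈ Finset.Icc 1 N,
      (∏ j ∈ Finset.Icc 1 (n - 1), (1 - (j : ℝ) / V)) *
          (1 / (Nat.factorial (n - 1) : ℝ)) *
          ((n : ℝ) ^ (n - 1) / Real.exp 1 ^ (n - 1)) * q ^ (n - 1)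
      ≤ Real.exp 1 * Real.exp (a * |s|) * (2 * Real.sqrt N) := by
    calc ∑ n ∈ Finset.Icc 1 N,
        (∏ j ∈ Finset.Icc 1 (n - 1), (1 - (j : ℝ) / V)) *
          (1 / (Nat.factorial (n - 1) : ℝ)) *
          ((n : ℝ) ^ (n - 1) / Real.exp 1 ^ (n - 1)) * q ^ (n - 1)
        ≤ ∑ n ∈ Finset.Icc 1 N, Real.exp 1 * Real.exp (a * |s|) * (1 / Real.sqrt n) :=
          Finset.sum_le_sum hterm
      _ = Real.exp 1 * Real.exp (a * |s|) * ∑ n ∈ Finset.Icc 1 N, 1 / Real.sqrt n := by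
          rw [Finset.mul_sum]
      _ ≤ Real.exp 1 * Real.exp (a * |s|) * (2 * Real.sqrt N) := by
          apply mul_le_mul_of_nonneg_left (sum_inv_sqrt N) (by positivity)
  -- √N ≤ a^(1/2) V^(1/4)
  have hroot : Real.sqrt N ≤ a ^ ((1 : ℝ) / 2) * (V : ℝ) ^ ((1 : ℝ) / 4) := by
    have h1 : Real.sqrt N ≤ Real.sqrt (a * Real.sqrt V) := Real.sqrt_le_sqrt hNle
    have h2 : Real.sqrt (a * Real.sqrt V)
        = Real.sqrt a * Real.sqrt (Real.sqrt V) := Real.sqrt_mul ha.le _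
    have h3 : Real.sqrt a = a ^ ((1 : ℝ) / 2) := Real.sqrt_eq_rpow a
    have h4 : Real.sqrt (Real.sqrt V) = (V : ℝ) ^ ((1 : ℝ) / 4) := by
      have hh : (((V : ℝ) ^ ((1:ℝ)/2)) ^ ((1:ℝ)/2)) = (V : ℝ) ^ ((1:ℝ)/4) := by
        rw [← Real.rpow_mul hV0.le]; norm_num
      rw [Real.sqrt_eq_rpow, Real.sqrt_eq_rpow, hh]
    rw [h2, h3, h4] at h1
    exact h1
  calc ∑ n ∈ Finset.Icc 1 N,
      (∏ j ∈ Finset.Icc 1 (n - 1), (1 - (j : ℝ) / V)) *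
          (1 / (Nat.factorial (n - 1) : ℝ)) *
          ((n : ℝ) ^ (n - 1) / Real.exp 1 ^ (n - 1)) * q ^ (n - 1)
      ≤ Real.exp 1 * Real.exp (a * |s|) * (2 * Real.sqrt N) := hsum
    _ ≤ Real.exp 1 * Real.exp (a * |s|) * (2 * (a ^ ((1 : ℝ) / 2) * (V : ℝ) ^ ((1 : ℝ) / 4))) := by
        apply mul_le_mul_of_nonneg_left _ (by positivity)
        linarith
    _ = 2 * Real.exp 1 * Real.exp (a * |s|) * (a ^ ((1 : ℝ) / 2) * (V : ℝ) ^ ((1 : ℝ) / 4)) := by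
        ring
    _ ≤ 2 * Real.exp 1 * Real.exp (a * |s|) *
        (1 + a ^ ((1 : ℝ) / 2) * (V : ℝ) ^ ((1 : ℝ) / 4)) := by
        apply mul_le_mul_of_nonneg_left _ (by positivity)
        linarith
end

section
/- For every s ∈ ℝ there exist constants C_s > 0 and b₀ > 0 such that for every real b ≥ b₀ and every positive integer V, ∑_{n=⌈b√V⌉}^{V} (∏_{j=1}^{n-1} (1 - j/V)) · (1/(n-1)!) · (n^{n-1}/e^{n-1}) · (1 + s/√V)^{n-1} ≤ C_s · b^{-1/2} · V^{1/4}. -/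
open Real Finset
lemma stirling_lower (m : ℕ) (hm : 1 ≤ m) :
    Real.sqrt m * ((m : ℝ) / Real.exp 1) ^ m ≤ m.factorial := by
  have htend : Filter.Tendsto (Stirling.stirlingSeq ∘ Nat.succ) Filter.atTop
      (nhds (Real.sqrt Real.pi)) :=
    (Filter.tendsto_add_atTop_iff_nat 1).mpr Stirling.tendsto_stirlingSeq_sqrt_pi
  have h1 : Real.sqrt Real.pi ≤ Stirling.stirlingSeq m := by
    obtain ⟨k, rfl⟩ := Nat.exists_eq_add_of_le hm
    have := Stirling.stirlingSeq'_antitone.le_of_tendsto htend k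
    simpa [Nat.succ_eq_add_one, Nat.add_comm] using this
  have hpi : (1 : ℝ) ≤ Real.sqrt Real.pi := by
    rw [show (1:ℝ) = Real.sqrt 1 by simp]
    exact Real.sqrt_le_sqrt (by linarith [Real.pi_gt_three])
  have hm0 : (0:ℝ) < m := by exact_mod_cast hm
  have hden : 0 < Real.sqrt (2 * m : ℝ) * ((m : ℝ) / Real.exp 1) ^ m := by positivity
  have h2 : Real.sqrt (2 * m : ℝ) * ((m : ℝ) / Real.exp 1) ^ m ≤ m.factorial := by
    have := le_trans hpi h1
    rw [Stirling.stirlingSeq, le_div_iff₀ hden] at this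
    linarith
  refine le_trans ?_ h2
  have hle : Real.sqrt m ≤ Real.sqrt (2*m : ℝ) := Real.sqrt_le_sqrt (by linarith)
  have hpow : (0:ℝ) ≤ ((m : ℝ) / Real.exp 1) ^ m := by positivity
  nlinarith [Real.sqrt_nonneg (m:ℝ)]

lemma sum_Icc_cast (m : ℕ) : ∑ j ∈ Finset.Icc 1 m, (j : ℝ) = m * (m + 1) / 2 := by
  induction m with
  | zero => simp
  | succ k ih =>
    rw [Finset.sum_Icc_succ_top (by omega)]
    push_cast
    rw [ih]; ring

lemma factor_bound (n : ℕ) (hn : 2 ≤ n) :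
    (1 / ((n-1).factorial : ℝ)) * ((n:ℝ)^(n-1) / Real.exp 1 ^ (n-1))
      ≤ Real.exp 1 * Real.sqrt 2 / Real.sqrt n := by
  obtain ⟨m, rfl⟩ : ∃ m, n = m + 1 := ⟨n-1, by omega⟩
  have hm : 1 ≤ m := by omega
  have hm0 : (0:ℝ) < m := by exact_mod_cast hm
  simp only [Nat.add_sub_cancel]
  have hfac : (0:ℝ) < (m.factorial : ℝ) := by exact_mod_cast m.factorial_pos
  have hs := stirling_lower m hm
  have hsm : (0:ℝ) < Real.sqrt m := Real.sqrt_pos.mpr hm0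
  have hpow : (0:ℝ) < ((m:ℝ)/Real.exp 1)^m := by positivity
  have h1 : (1:ℝ) / (m.factorial : ℝ) ≤ 1 / (Real.sqrt m * ((m:ℝ)/Real.exp 1)^m) :=
    one_div_le_one_div_of_le (by positivity) hs
  have hcast : ((m+1:ℕ):ℝ) = (m:ℝ) + 1 := by push_cast; ring
  rw [hcast]
  have step1 : (1:ℝ) / (m.factorial : ℝ) * (((m:ℝ)+1)^m / Real.exp 1 ^ m)
      ≤ (1 / (Real.sqrt m * ((m:ℝ)/Real.exp 1)^m)) * (((m:ℝ)+1)^m / Real.exp 1 ^ m) :=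
    mul_le_mul_of_nonneg_right h1 (by positivity)
  have heq : (1 / (Real.sqrt m * ((m:ℝ)/Real.exp 1)^m)) * (((m:ℝ)+1)^m / Real.exp 1 ^ m)
      = (1 + 1/(m:ℝ))^m / Real.sqrt m := by
    rw [show (1:ℝ) + 1/(m:ℝ) = ((m:ℝ)+1)/m by field_simp, div_pow, div_pow]
    field_simp
  rw [heq] at step1
  have hexp : (1 + 1/(m:ℝ))^m ≤ Real.exp 1 := by
    have h2 : (1:ℝ) + 1/(m:ℝ) ≤ Real.exp (1/(m:ℝ)) := by
      linarith [Real.add_one_le_exp (1/(m:ℝ))]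
    have h3 : (1 + 1/(m:ℝ))^m ≤ Real.exp (1/(m:ℝ)) ^ m :=
      pow_le_pow_left₀ (by positivity) h2 m
    rwa [← Real.exp_nat_mul, mul_one_div, div_self hm0.ne'] at h3
  have hm1 : (1:ℝ) ≤ m := by exact_mod_cast hm
  have hsqrt : Real.sqrt ((m:ℝ)+1) ≤ Real.sqrt 2 * Real.sqrt m := by
    rw [← Real.sqrt_mul (by norm_num : (0:ℝ) ≤ 2)]
    exact Real.sqrt_le_sqrt (by linarith)
  have hsn : (0:ℝ) < Real.sqrt ((m:ℝ)+1) := Real.sqrt_pos.mpr (by linarith)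
  refine step1.trans ?_
  rw [div_le_div_iff₀ hsm hsn]
  calc (1 + 1/(m:ℝ))^m * Real.sqrt ((m:ℝ)+1)
      ≤ Real.exp 1 * (Real.sqrt 2 * Real.sqrt m) := by
        apply mul_le_mul hexp hsqrt hsn.le (Real.exp_pos 1).le
    _ = Real.exp 1 * Real.sqrt 2 * Real.sqrt m := by ring

set_option maxHeartbeats 4000000 in
/-- For every `s ∈ ℝ` there are `C_s > 0` and `b₀ > 0` such that for all
`b ≥ b₀` and all `V ≥ 1` with `1 + s/√V ≥ 0`,
`∑_{n=⌈b√V⌉}^{V} (∏_{j=1}^{n-1}(1-j/V)) (1/(n-1)!) (n^{n-1}/e^{n-1}) (1+s/√V)^{n-1}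
  ≤ C_s b^{-1/2} V^{1/4}`. -/
theorem tail_sum_bound (s : ℝ) :
    ∃ C : ℝ, 0 < C ∧ ∃ b₀ : ℝ, 0 < b₀ ∧ ∀ b : ℝ, b₀ ≤ b → ∀ V : ℕ, 0 < V →
      0 ≤ 1 + s / Real.sqrt V →
      ∑ n ∈ Finset.Icc ⌈b * Real.sqrt V⌉₊ V,
        (∏ j ∈ Finset.Icc 1 (n - 1), (1 - (j : ℝ) / V)) *
          (1 / (Nat.factorial (n - 1) : ℝ)) *
          ((n : ℝ) ^ (n - 1) / Real.exp 1 ^ (n - 1)) *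
          (1 + s / Real.sqrt V) ^ (n - 1)
      ≤ C * b ^ (-(1 : ℝ) / 2) * (V : ℝ) ^ ((1 : ℝ) / 4) := by
  refine ⟨100, by norm_num, 8*(|s|+2), by positivity, ?_⟩
  intro b hb V hV hbase
  have habs : 0 ≤ |s| := abs_nonneg s
  have hb16 : 16 ≤ b := by linarith
  have hb0 : 0 < b := by linarith
  have hsb : |s| ≤ b/8 := by linarith
  set sV := Real.sqrt V with hsVdef
  have hsV1 : 1 ≤ sV := by
    rw [hsVdef, show (1:ℝ) = Real.sqrt 1 by simp]
    exact Real.sqrt_le_sqrt (by exact_mod_cast hV)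
  have hsV0 : 0 < sV := by linarith
  have hVR : (0:ℝ) < V := by exact_mod_cast hV
  have hVne : (V:ℝ) ≠ 0 := hVR.ne'
  have hVsq : sV * sV = (V:ℝ) := Real.mul_self_sqrt (Nat.cast_nonneg V)
  set N := ⌈b * sV⌉₊ with hNdef
  have hNge : b * sV ≤ (N:ℝ) := Nat.le_ceil _
  have hRHSpos : (0:ℝ) ≤ 100 * b ^ (-(1:ℝ)/2) * (V:ℝ)^((1:ℝ)/4) := by positivity
  by_cases hNV : N ≤ V
  swap
  · rw [Finset.Icc_eq_empty (by omega)]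
    simpa using hRHSpos
  have hN16 : (16:ℝ) ≤ N := le_trans (by nlinarith) hNge
  have hN2 : 2 ≤ N := by exact_mod_cast le_trans (by norm_num : (2:ℝ) ≤ 16) hN16
  have hN0 : (0:ℝ) < N := by linarith
  have hNVR : (N:ℝ) ≤ V := by exact_mod_cast hNV
  set r := Real.exp (-((N:ℝ)/(4*V))) with hrdef
  have hr0 : 0 < r := Real.exp_pos _
  have hr1 : r < 1 := by
    rw [hrdef]
    apply Real.exp_lt_one_iff.mpr
    have h : 0 < (N:ℝ)/(4*V) := by positivity
    linarith
  set KK := Real.exp 1 * Real.sqrt 2 * Real.exp (1/2 : ℝ) with hKKdef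
  have hKK0 : 0 < KK := by positivity
  -- termwise bound
  have hterm : ∀ n ∈ Finset.Icc N V,
      (∏ j ∈ Finset.Icc 1 (n - 1), (1 - (j : ℝ) / V)) *
          (1 / (Nat.factorial (n - 1) : ℝ)) *
          ((n : ℝ) ^ (n - 1) / Real.exp 1 ^ (n - 1)) *
          (1 + s / sV) ^ (n - 1)
        ≤ KK / Real.sqrt N * r ^ n := by
    intro n hn
    rw [Finset.mem_Icc] at hn
    obtain ⟨hn1, hn2⟩ := hn
    have hn2R : (n:ℝ) ≤ V := by exact_mod_cast hn2
    have hnN : (N:ℝ) ≤ (n:ℝ) := by exact_mod_cast hn1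
    have hnn : 2 ≤ n := le_trans hN2 hn1
    have hn0 : (0:ℝ) < n := by positivity
    have hn1R : (1:ℝ) ≤ n := by exact_mod_cast (by omega : 1 ≤ n)
    have hmcast : ((n-1:ℕ):ℝ) = (n:ℝ) - 1 := by
      have h1n : 1 ≤ n := by omega
      push_cast [h1n]; ring
    -- product bound
    have hP : ∏ j ∈ Finset.Icc 1 (n - 1), (1 - (j : ℝ) / V)
        ≤ Real.exp (-(((n:ℝ)-1) * (n:ℝ)) / (2*V)) := by
      have hle : ∏ j ∈ Finset.Icc 1 (n - 1), (1 - (j : ℝ) / V)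
          ≤ ∏ j ∈ Finset.Icc 1 (n - 1), Real.exp (-((j:ℝ)/V)) := by
        apply Finset.prod_le_prod
        · intro j hj
          rw [Finset.mem_Icc] at hj
          have hjV : (j:ℝ) ≤ V := by
            have : j ≤ V := by omega
            exact_mod_cast this
          have : (j:ℝ)/V ≤ 1 := by rw [div_le_one hVR]; exact hjV
          linarith
        · intro j hj
          have := Real.add_one_le_exp (-((j:ℝ)/V))
          linarith
      rw [← Real.exp_sum] at hle
      refine hle.trans (le_of_eq ?_)
      congr 1
      have hneg : ∑ j ∈ Finset.Icc 1 (n-1), -((j:ℝ)/V)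
          = -(∑ j ∈ Finset.Icc 1 (n-1), ((j:ℝ)/V)) := Finset.sum_neg_distrib _
      rw [hneg, ← Finset.sum_div, sum_Icc_cast, hmcast]
      ring
    -- factorial factor bound
    have hF := factor_bound n hnn
    -- last factor bound
    have hH : (1 + s / sV) ^ (n - 1) ≤ Real.exp ((n:ℝ)^2/(8*V)) := by
      have h1 : 1 + s/sV ≤ Real.exp (s/sV) := by
        linarith [Real.add_one_le_exp (s/sV)]
      have h2 : (1 + s/sV)^(n-1) ≤ Real.exp (s/sV) ^ (n-1) :=
        pow_le_pow_left₀ hbase h1 _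
      rw [← Real.exp_nat_mul] at h2
      refine h2.trans (Real.exp_le_exp.mpr ?_)
      have hmn : ((n-1:ℕ):ℝ) ≤ (n:ℝ) := by rw [hmcast]; linarith
      have hm0' : (0:ℝ) ≤ ((n-1:ℕ):ℝ) := Nat.cast_nonneg _
      have hstep1 : ((n-1:ℕ):ℝ) * (s/sV) ≤ (n:ℝ) * |s| / sV := by
        rw [← mul_div_assoc, div_le_div_iff₀ hsV0 hsV0]
        have k1 := mul_le_mul_of_nonneg_left (le_abs_self s) hm0'
        have k2 := mul_le_mul_of_nonneg_right hmn habs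
        nlinarith [hsV0.le]
      refine hstep1.trans ?_
      have hbn : b * sV ≤ (n:ℝ) := le_trans hNge hnN
      rw [div_le_div_iff₀ hsV0 (by positivity : (0:ℝ) < 8*V), ← hVsq]
      have k1 : |s| * ((n:ℝ) * (8 * (sV*sV))) ≤ (b/8) * ((n:ℝ) * (8*(sV*sV))) :=
        mul_le_mul_of_nonneg_right hsb (by positivity)
      have k2 : (b * sV) * ((n:ℝ) * sV) ≤ (n:ℝ) * ((n:ℝ) * sV) :=
        mul_le_mul_of_nonneg_right hbn (by positivity)
      nlinarith [k1, k2]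
    -- combine
    have hPnn : (0:ℝ) ≤ ∏ j ∈ Finset.Icc 1 (n - 1), (1 - (j : ℝ) / V) := by
      apply Finset.prod_nonneg
      intro j hj
      rw [Finset.mem_Icc] at hj
      have hjV : (j:ℝ) ≤ V := by
        have : j ≤ V := by omega
        exact_mod_cast this
      have : (j:ℝ)/V ≤ 1 := by rw [div_le_one hVR]; exact hjV
      linarith
    have hFnn : (0:ℝ) ≤ (1 / (Nat.factorial (n - 1) : ℝ)) *
        ((n : ℝ) ^ (n - 1) / Real.exp 1 ^ (n - 1)) := by positivity
    have hcomb1 : (∏ j ∈ Finset.Icc 1 (n - 1), (1 - (j : ℝ) / V)) *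
        ((1 / (Nat.factorial (n - 1) : ℝ)) * ((n : ℝ) ^ (n - 1) / Real.exp 1 ^ (n - 1)))
        ≤ Real.exp (-(((n:ℝ)-1) * (n:ℝ)) / (2*V)) * (Real.exp 1 * Real.sqrt 2 / Real.sqrt n) :=
      mul_le_mul hP hF hFnn (Real.exp_pos _).le
    have hHnn : (0:ℝ) ≤ (1 + s / sV) ^ (n - 1) := pow_nonneg hbase _
    have hcomb2 : (∏ j ∈ Finset.Icc 1 (n - 1), (1 - (j : ℝ) / V)) *
        ((1 / (Nat.factorial (n - 1) : ℝ)) * ((n : ℝ) ^ (n - 1) / Real.exp 1 ^ (n - 1))) *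
        (1 + s / sV) ^ (n - 1)
        ≤ (Real.exp (-(((n:ℝ)-1) * (n:ℝ)) / (2*V)) * (Real.exp 1 * Real.sqrt 2 / Real.sqrt n)) *
          Real.exp ((n:ℝ)^2/(8*V)) :=
      mul_le_mul hcomb1 hH hHnn (by positivity)
    calc (∏ j ∈ Finset.Icc 1 (n - 1), (1 - (j : ℝ) / V)) *
          (1 / (Nat.factorial (n - 1) : ℝ)) *
          ((n : ℝ) ^ (n - 1) / Real.exp 1 ^ (n - 1)) *
          (1 + s / sV) ^ (n - 1)
        = (∏ j ∈ Finset.Icc 1 (n - 1), (1 - (j : ℝ) / V)) *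
          ((1 / (Nat.factorial (n - 1) : ℝ)) * ((n : ℝ) ^ (n - 1) / Real.exp 1 ^ (n - 1))) *
          (1 + s / sV) ^ (n - 1) := by ring
      _ ≤ (Real.exp (-(((n:ℝ)-1) * (n:ℝ)) / (2*V)) * (Real.exp 1 * Real.sqrt 2 / Real.sqrt n)) *
          Real.exp ((n:ℝ)^2/(8*V)) := hcomb2
      _ = (Real.exp 1 * Real.sqrt 2 / Real.sqrt n) *
          Real.exp (-(((n:ℝ)-1) * (n:ℝ)) / (2*V) + (n:ℝ)^2/(8*V)) := by
          rw [Real.exp_add]; ring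
      _ ≤ (Real.exp 1 * Real.sqrt 2 / Real.sqrt N) *
          Real.exp (1/2 + (n:ℝ) * (-((N:ℝ)/(4*V)))) := by
          apply mul_le_mul
          · apply div_le_div_of_nonneg_left (by positivity) (Real.sqrt_pos.mpr hN0)
            exact Real.sqrt_le_sqrt hnN
          · apply Real.exp_le_exp.mpr
            refine le_of_mul_le_mul_right ?_ (by positivity : (0:ℝ) < 8*V)
            have hmul : (-(((n:ℝ)-1) * (n:ℝ)) / (2*V) + (n:ℝ)^2/(8*V)) * (8*V)
                = -4*((n:ℝ)-1)*(n:ℝ) + (n:ℝ)^2 := by field_simp; ring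
            have hmul2 : ((1:ℝ)/2 + (n:ℝ) * (-((N:ℝ)/(4*V)))) * (8*V)
                = 4*(V:ℝ) - 2*(n:ℝ)*(N:ℝ) := by field_simp; ring
            rw [hmul, hmul2]
            nlinarith [mul_le_mul_of_nonneg_left hnN hn0.le, hn2R]
          · positivity
          · positivity
      _ = KK / Real.sqrt N * r ^ n := by
          rw [hKKdef, hrdef, Real.exp_add, ← Real.exp_nat_mul]
          ring
  -- sum the bound
  have hsum1 : ∑ n ∈ Finset.Icc N V,
      (∏ j ∈ Finset.Icc 1 (n - 1), (1 - (j : ℝ) / V)) *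
        (1 / (Nat.factorial (n - 1) : ℝ)) *
        ((n : ℝ) ^ (n - 1) / Real.exp 1 ^ (n - 1)) *
        (1 + s / sV) ^ (n - 1)
      ≤ ∑ n ∈ Finset.Icc N V, KK / Real.sqrt N * r ^ n :=
    Finset.sum_le_sum hterm
  have hgeom : ∑ n ∈ Finset.Icc N V, r ^ n ≤ (1 - r)⁻¹ := by
    calc ∑ n ∈ Finset.Icc N V, r ^ n ≤ ∑ n ∈ Finset.range (V+1), r ^ n := by
          apply Finset.sum_le_sum_of_subset_of_nonneg
          · intro x hx
            rw [Finset.mem_Icc] at hx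
            rw [Finset.mem_range]
            omega
          · intro i _ _
            positivity
      _ ≤ ∑' n : ℕ, r ^ n :=
          Summable.sum_le_tsum _ (fun i _ => by positivity) (summable_geometric_of_lt_one hr0.le hr1)
      _ = (1 - r)⁻¹ := tsum_geometric_of_lt_one hr0.le hr1
  have hrlow : (N:ℝ)/(4*V) * Real.exp (-((1:ℝ)/4)) ≤ 1 - r := by
    have hx : (N:ℝ)/(4*V) ≤ 1/4 := by
      rw [div_le_div_iff₀ (by positivity) (by norm_num : (0:ℝ) < 4)]
      linarith
    have h1 : Real.exp (-((1:ℝ)/4)) ≤ Real.exp (-((N:ℝ)/(4*V))) := by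
      apply Real.exp_le_exp.mpr
      exact neg_le_neg hx
    have h2 : (N:ℝ)/(4*V) * Real.exp (-((N:ℝ)/(4*V))) ≤ 1 - r := by
      rw [hrdef, Real.exp_neg, ← div_eq_mul_inv,
        div_le_iff₀ (Real.exp_pos ((N:ℝ)/(4*V)))]
      have he : (1 - (Real.exp ((N:ℝ)/(4*V)))⁻¹) * Real.exp ((N:ℝ)/(4*V))
          = Real.exp ((N:ℝ)/(4*V)) - 1 := by
        field_simp
      rw [he]
      linarith [Real.add_one_le_exp ((N:ℝ)/(4*V))]
    calc (N:ℝ)/(4*V) * Real.exp (-((1:ℝ)/4))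
        ≤ (N:ℝ)/(4*V) * Real.exp (-((N:ℝ)/(4*V))) :=
          mul_le_mul_of_nonneg_left h1 (by positivity)
      _ ≤ 1 - r := h2
  have h1r0 : 0 < 1 - r := by linarith
  have hinv : (1 - r)⁻¹ ≤ 4*(V:ℝ)/(N:ℝ) * Real.exp ((1:ℝ)/4) := by
    have hpos : 0 < (N:ℝ)/(4*V) * Real.exp (-((1:ℝ)/4)) := by positivity
    have h := inv_anti₀ hpos hrlow
    refine h.trans (le_of_eq ?_)
    rw [mul_inv, ← Real.exp_neg, neg_neg, inv_div]
  -- numeric bound on the constant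
  have he1 : Real.exp 1 ≤ 2.7182818286 := Real.exp_one_lt_d9.le
  have hs2 : Real.sqrt 2 ≤ 1.415 := by
    rw [show (1.415:ℝ) = Real.sqrt (1.415^2) by rw [Real.sqrt_sq (by norm_num)]]
    exact Real.sqrt_le_sqrt (by norm_num)
  have hehalfsq : Real.exp ((1:ℝ)/2) ^ 2 = Real.exp 1 := by
    rw [← Real.exp_nat_mul]; norm_num
  have hehalf : Real.exp ((1:ℝ)/2) ≤ 1.65 := by
    nlinarith [Real.exp_pos ((1:ℝ)/2), hehalfsq, he1]
  have hequarsq : Real.exp ((1:ℝ)/4) ^ 2 = Real.exp ((1:ℝ)/2) := by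
    rw [← Real.exp_nat_mul]; norm_num
  have hequar : Real.exp ((1:ℝ)/4) ≤ 1.29 := by
    nlinarith [Real.exp_pos ((1:ℝ)/4), hequarsq, hehalf]
  have p1 : Real.exp 1 * Real.sqrt 2 ≤ 2.7182818286 * 1.415 :=
    mul_le_mul he1 hs2 (Real.sqrt_nonneg 2) (by norm_num)
  have p2 : Real.exp 1 * Real.sqrt 2 * Real.exp ((1:ℝ)/2)
      ≤ 2.7182818286 * 1.415 * 1.65 :=
    mul_le_mul p1 hehalf (Real.exp_pos _).le (by norm_num)
  have p3 : KK * Real.exp ((1:ℝ)/4) ≤ 2.7182818286 * 1.415 * 1.65 * 1.29 := by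
    rw [hKKdef]
    exact mul_le_mul p2 hequar (Real.exp_pos _).le (by norm_num)
  have hnum : 4*KK*Real.exp ((1:ℝ)/4) ≤ 100 := by nlinarith [p3]
  -- the key scaling inequality
  have hVNb : (V:ℝ)/((N:ℝ)*Real.sqrt N) ≤ Real.sqrt sV / Real.sqrt b := by
    have hmono : (b*sV) * Real.sqrt (b*sV) ≤ (N:ℝ) * Real.sqrt N :=
      mul_le_mul hNge (Real.sqrt_le_sqrt hNge) (Real.sqrt_nonneg _) (Nat.cast_nonneg N)
    have hposd : 0 < (b*sV) * Real.sqrt (b*sV) := by positivity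
    have h1 : (V:ℝ)/((N:ℝ)*Real.sqrt N) ≤ (V:ℝ)/((b*sV)*Real.sqrt (b*sV)) :=
      div_le_div_of_nonneg_left (by positivity) hposd hmono
    refine h1.trans ?_
    have key : Real.sqrt sV * Real.sqrt sV = sV := Real.mul_self_sqrt hsV0.le
    have keyb : Real.sqrt b * Real.sqrt b = b := Real.mul_self_sqrt hb0.le
    have h2 : (V:ℝ)/((b*sV)*Real.sqrt (b*sV)) = Real.sqrt sV / (b * Real.sqrt b) := by
      rw [Real.sqrt_mul hb0.le, div_eq_div_iff (by positivity) (by positivity)]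
      calc (V:ℝ) * (b * Real.sqrt b) = (b * Real.sqrt b) * (sV * sV) := by
            rw [hVsq]; ring
        _ = (b * Real.sqrt b) * (sV * (Real.sqrt sV * Real.sqrt sV)) := by rw [key]
        _ = Real.sqrt sV * (b * sV * (Real.sqrt b * Real.sqrt sV)) := by ring
    rw [h2]
    apply div_le_div_of_nonneg_left (Real.sqrt_nonneg sV) (Real.sqrt_pos.mpr hb0)
    nlinarith [Real.sqrt_nonneg b, Real.sqrt_pos.mpr hb0]
  -- rewrite the right-hand side
  have hrb : b ^ (-(1:ℝ)/2) = (Real.sqrt b)⁻¹ := by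
    rw [show (-(1:ℝ)/2) = -(1/2 : ℝ) by norm_num, Real.rpow_neg hb0.le, ← Real.sqrt_eq_rpow]
  have hrV : (V:ℝ) ^ ((1:ℝ)/4) = Real.sqrt sV := by
    rw [show ((1:ℝ)/4) = (1/2 : ℝ)*(1/2 : ℝ) by norm_num, Real.rpow_mul (Nat.cast_nonneg V),
      ← Real.sqrt_eq_rpow, ← Real.sqrt_eq_rpow, hsVdef]
  refine le_trans hsum1 ?_
  rw [← Finset.mul_sum, hrb, hrV]
  have hKN : (0:ℝ) ≤ KK / Real.sqrt N := by positivity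
  calc KK / Real.sqrt N * ∑ n ∈ Finset.Icc N V, r ^ n
      ≤ KK / Real.sqrt N * (1-r)⁻¹ := mul_le_mul_of_nonneg_left hgeom hKN
    _ ≤ KK / Real.sqrt N * (4*(V:ℝ)/(N:ℝ) * Real.exp ((1:ℝ)/4)) :=
        mul_le_mul_of_nonneg_left hinv hKN
    _ = (4*KK*Real.exp ((1:ℝ)/4)) * ((V:ℝ) / ((N:ℝ) * Real.sqrt N)) := by
        field_simp
    _ ≤ (4*KK*Real.exp ((1:ℝ)/4)) * (Real.sqrt sV / Real.sqrt b) :=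
        mul_le_mul_of_nonneg_left hVNb (by positivity)
    _ ≤ 100 * (Real.sqrt sV / Real.sqrt b) :=
        mul_le_mul_of_nonneg_right hnum (by positivity)
    _ = 100 * (Real.sqrt b)⁻¹ * Real.sqrt sV := by ring
end
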